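/- arXiv:1510.06094 — 7 statements merged into one kernel-verified Lean document; each statement's English description precedes it below -/
import Mathlib

section
/- Let k = 2K+1 ≥ 5 be an odd integer. Let D be the (K-1)×(K-1) rational matrix with entries D_{r,s} = (-2/(2s-1)) · ∑_{n=0}^{k-2s} C(k-2r-1, k-2s-n) · C(n+2s-2, n) · B_n for 1 ≤ r, s ≤ K-1. Then D is a two-sided inverse of 𝒞, i.e. 𝒞 · D = I and D · 𝒞 = I, where I is the (K-1)×(K-1) identity matrix. (In particular, (𝒞^{-1})_{r,s} = D_{r,s}.) -/
/-!
Write `N = K - 1`, index rows and columns from `0`, and put `Y = X + 1`. Row `s` of `𝒞` is the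
coefficient vector of `zagierPoly N (2N - 2s) = ∑_r 𝒞_{s,r} Y^(2N-2r)`, while column `t` of `D` is
`-2/(2t+1)` times the linear functional `E(V) = ∑_n C(n+α, n) B_n [X^(M-n)] V` (`α = 2t`,
`M = 2N+1-2t`) evaluated on the powers `Y^(2N-2r)`; so `(𝒞 D)_{s,t} = -2/(2t+1) · E(zagierPoly)`.

The identity `∑_{k ≤ m} C(m,k) B_k = B_m + [m = 1]` gives
`E(Y^(M+α-j) X^j) = E(X^j) + (α+1)[j + 1 = M]`, and the vanishing of odd Bernoulli numbers past
`B_1` gives `(1 + (-1)^j) E(X^j) = -(α+1)[j + 1 = M]`. Expanding `X + 2 = 2Y - X`, these two facts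
make `E` vanish on `(X+2)^e Y^f + (X+2)^e` whenever `e + f = M + α`. By the binomial theorem in
`Y ± 1`, `2 · zagierPoly N e = ((X+2)^e - X^e) Y^f + (X+2)^e + X^e - 2` with `f = 2N+1-e`, so `E`
sees only `-(Y^f X^e - X^e)`, which contributes `-(α+1)` exactly when `s = t`. Hence `𝒞 D = 1`,
and `D 𝒞 = 1` since the matrices are square.
-/

open Polynomial hiding bernoulli bernoulli_one
open Finset

section ParitySums

variable {R : Type*} [CommRing R]

theorem sum_range_one_sub_neg_one_pow_mul (g : ℕ → R) (N : ℕ) :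
    ∑ i ∈ range (2 * N + 1), (1 - (-1) ^ i) * g i = 2 * ∑ r ∈ range N, g (2 * r + 1) := by
  induction N with
  | zero => simp
  | succ N ih =>
    rw [show 2 * (N + 1) + 1 = 2 * N + 1 + 1 + 1 by ring, sum_range_succ, sum_range_succ, ih,
      sum_range_succ]
    simp only [pow_succ, pow_mul, pow_zero, mul_neg, mul_one, neg_neg, one_pow, sub_neg_eq_add,
      sub_self, zero_mul, add_zero]
    ring

theorem sum_range_one_add_neg_one_pow_mul (g : ℕ → R) (N : ℕ) :
    ∑ i ∈ range (2 * N + 1), (1 + (-1) ^ i) * g i = 2 * ∑ r ∈ range (N + 1), g (2 * r) := by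
  induction N with
  | zero =>
    simp only [mul_zero, zero_add, range_one, sum_singleton, pow_zero]
    ring
  | succ N ih =>
    rw [show 2 * (N + 1) + 1 = 2 * N + 1 + 1 + 1 by ring, sum_range_succ, sum_range_succ, ih,
      sum_range_succ _ (N + 1)]
    simp only [pow_succ, pow_mul, pow_zero, mul_neg, mul_one, neg_neg, one_pow, add_neg_cancel,
      zero_mul, add_zero, mul_add, add_right_inj]
    ring

theorem two_mul_sum_choose_odd_mul_pow (y : R) {N e f : ℕ} (he : e ≤ 2 * N)
    (hef : e + f = 2 * N + 1) :
    2 * ∑ r ∈ range N, (e.choose (2 * r + 1) : R) * y ^ (2 * N - 2 * r)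
      = ((y + 1) ^ e - (y - 1) ^ e) * y ^ f := by
  have hexp : ((y + 1) ^ e - (y - 1) ^ e) * y ^ f
      = ∑ i ∈ range (2 * N + 1), (1 - (-1) ^ i) * ((e.choose i : R) * y ^ (2 * N + 1 - i)) := by
    rw [show y + 1 = 1 + y by ring, show y - 1 = -1 + y by ring, add_pow, add_pow,
      ← sum_sub_distrib, sum_mul]
    refine (sum_congr rfl fun i hi => ?_).trans
      (sum_subset (range_subset_range.mpr (by omega)) fun i _ hi => ?_)
    · have hi : i < e + 1 := mem_range.mp hi
      rw [show 2 * N + 1 - i = e - i + f by omega, pow_add]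
      simp only [one_pow, one_mul]
      ring
    · rw [Nat.choose_eq_zero_of_lt (by simpa using hi)]; simp
  rw [hexp, sum_range_one_sub_neg_one_pow_mul]
  congr 1
  refine sum_congr rfl fun r hr => ?_
  rw [show 2 * N + 1 - (2 * r + 1) = 2 * N - 2 * r by omega]

theorem two_mul_sum_choose_even_mul_pow (y : R) {N e : ℕ} (he : e ≤ 2 * N) (he2 : Even e) :
    2 * ∑ r ∈ range N, (e.choose (2 * N - 2 * r) : R) * y ^ (2 * N - 2 * r)
      = (y + 1) ^ e + (y - 1) ^ e - 2 := by
  have hexp : (y + 1) ^ e + (y - 1) ^ e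
      = ∑ i ∈ range (2 * N + 1), (1 + (-1) ^ i) * ((e.choose i : R) * y ^ i) := by
    rw [← he2.neg_pow (y - 1), show -(y - 1) = -y + 1 by ring, add_pow, add_pow,
      ← sum_add_distrib]
    refine (sum_congr rfl fun i _ => ?_).trans
      (sum_subset (range_subset_range.mpr (by omega)) fun i _ hi => ?_)
    · rw [neg_pow]
      ring
    · rw [Nat.choose_eq_zero_of_lt (by simpa using hi)]; simp
  rw [hexp, sum_range_one_add_neg_one_pow_mul, sum_range_succ', ← sum_range_reflect]
  simp only [mul_zero, pow_zero, Nat.choose_zero_right, Nat.cast_one, mul_one, mul_add,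
    add_sub_cancel_right]
  congr 1
  refine sum_congr rfl fun r hr => ?_
  rw [show 2 * N - 2 * (N - 1 - r) = 2 * r + 2 by have := mem_range.mp hr; omega]

end ParitySums

namespace ZagierMatrix

noncomputable def bernoulliTerm (α m : ℕ) : ℚ := ((m + α).choose m : ℚ) * bernoulli m

noncomputable def bernoulliFunctional (α M : ℕ) : ℚ[X] →ₗ[ℚ] ℚ :=
  ∑ n ∈ range (M + 1), bernoulliTerm α n • lcoeff ℚ (M - n)

section

variable (α M : ℕ)

theorem bernoulliFunctional_apply (V : ℚ[X]) :
    bernoulliFunctional α M V = ∑ n ∈ range (M + 1), bernoulliTerm α n * V.coeff (M - n) := by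
  simp [bernoulliFunctional]

theorem bernoulliFunctional_X_add_one_pow (d : ℕ) :
    bernoulliFunctional α M ((X + 1) ^ d)
      = ∑ n ∈ range (M + 1),
          (d.choose (M - n) : ℚ) * ((n + α).choose n : ℚ) * bernoulli n := by
  rw [bernoulliFunctional_apply]
  exact sum_congr rfl fun n _ => by rw [coeff_X_add_one_pow, bernoulliTerm]; ring

theorem sum_bernoulliTerm_mul_choose (m : ℕ) :
    ∑ n ∈ range (m + 1), bernoulliTerm α n * ((m + α).choose (m - n) : ℚ)
      = bernoulliTerm α m + if m = 1 then (α + 1 : ℚ) else 0 := by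
  have hterm : ∀ n ∈ range (m + 1), bernoulliTerm α n * ((m + α).choose (m - n) : ℚ)
      = ((m + α).choose m : ℚ) * ((m.choose n : ℚ) * bernoulli n) := by
    intro n hn
    have hnm : n ≤ m := Nat.lt_succ_iff.mp (mem_range.mp hn)
    have h := Nat.choose_mul (n := m + α) (k := m) (s := m - n) (by omega)
    rw [Nat.choose_symm hnm, show m + α - (m - n) = n + α by omega,
      show m - (m - n) = n by omega] at h
    have h' : ((m + α).choose m : ℚ) * m.choose n
        = (m + α).choose (m - n) * (n + α).choose n := by
      exact_mod_cast h
    rw [bernoulliTerm]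
    linear_combination -bernoulli n * h'
  rw [sum_congr rfl hterm, ← mul_sum, sum_range_succ, _root_.sum_bernoulli, Nat.choose_self,
    bernoulliTerm]
  split_ifs with hm
  · subst hm
    rw [Nat.choose_one_right]
    push_cast
    ring
  · ring

theorem bernoulliFunctional_X_pow (j : ℕ) :
    bernoulliFunctional α M (X ^ j) = if j ≤ M then bernoulliTerm α (M - j) else 0 := by
  rw [bernoulliFunctional_apply]
  simp_rw [coeff_X_pow]
  split_ifs with hj
  · rw [sum_eq_single_of_mem (M - j) (mem_range.mpr (by omega)) fun n hn hne => by
      rw [if_neg (by have := mem_range.mp hn; omega), mul_zero]]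
    rw [if_pos (by omega), mul_one]
  · exact sum_eq_zero fun n hn => by rw [if_neg (by have := mem_range.mp hn; omega), mul_zero]

theorem bernoulliFunctional_X_add_one_pow_mul_X_pow (j : ℕ) :
    bernoulliFunctional α M ((X + 1) ^ (M + α - j) * X ^ j)
      = bernoulliFunctional α M (X ^ j) + if j + 1 = M then (α + 1 : ℚ) else 0 := by
  rw [bernoulliFunctional_apply, bernoulliFunctional_X_pow]
  simp_rw [coeff_mul_X_pow', coeff_X_add_one_pow]
  by_cases hjM : j ≤ M
  · obtain ⟨m, rfl⟩ : ∃ m, M = j + m := ⟨M - j, by omega⟩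
    have hsum : ∑ n ∈ range (j + m + 1), bernoulliTerm α n *
          (if j ≤ j + m - n then ((j + m + α - j).choose (j + m - n - j) : ℚ) else 0)
        = ∑ n ∈ range (m + 1), bernoulliTerm α n * ((m + α).choose (m - n) : ℚ) := by
      refine (sum_subset (range_subset_range.mpr (by omega)) fun n hn hnm => ?_).symm.trans
        (sum_congr rfl fun n hn => ?_)
      · simp only [mem_range] at hn hnm
        rw [if_neg (by omega), mul_zero]
      · simp only [mem_range] at hn
        rw [if_pos (by omega), show j + m + α - j = m + α by omega,
          show j + m - n - j = m - n by omega]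
    rw [hsum, sum_bernoulliTerm_mul_choose, if_pos hjM, Nat.add_sub_cancel_left]
    simp only [show m = 1 ↔ j + 1 = j + m by omega]
  · rw [if_neg hjM, if_neg (by omega), zero_add]
    exact sum_eq_zero fun n hn => by rw [if_neg (by have := mem_range.mp hn; omega), mul_zero]

theorem one_add_neg_one_pow_mul_bernoulliFunctional_X_pow (hM : Odd M) (j : ℕ) :
    (1 + (-1) ^ j) * bernoulliFunctional α M (X ^ j)
      = if j + 1 = M then -(α + 1 : ℚ) else 0 := by
  rw [bernoulliFunctional_X_pow]
  rcases Nat.even_or_odd j with hj | hj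
  · rw [hj.neg_one_pow]
    by_cases hjM : j + 1 = M
    · subst hjM
      rw [if_pos (Nat.le_succ j), Nat.add_sub_cancel_left, bernoulliTerm, Nat.choose_one_right,
        bernoulli_one, if_pos rfl]
      push_cast
      ring
    · rw [if_neg hjM]
      split_ifs with hle
      · obtain ⟨k, hk⟩ : Odd (M - j) := Nat.Odd.sub_even hle hM hj
        rw [bernoulliTerm, bernoulli_eq_zero_of_odd ⟨k, hk⟩ (by omega), mul_zero, mul_zero]
      · rw [mul_zero]
  · rw [hj.neg_one_pow, add_neg_cancel, zero_mul, if_neg]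
    rintro rfl
    exact Nat.not_even_iff_odd.mpr hM hj.add_one

theorem bernoulliFunctional_X_add_two_pow_mul_add {e f : ℕ} (hM : Odd M) (hef : e + f = M + α) :
    bernoulliFunctional α M ((X + 2) ^ e * (X + 1) ^ f + (X + 2) ^ e) = 0 := by
  have hexp : (X + 2 : ℚ[X]) ^ e * (X + 1) ^ f + (X + 2) ^ e
      = ∑ i ∈ range (e + 1), (e.choose i * 2 ^ (e - i) : ℚ) •
          ((-1 : ℚ) ^ i • ((X + 1) ^ (M + α - i) * X ^ i) + X ^ i) := by
    have h1 := add_pow (-X : ℚ[X]) (2 * (X + 1)) e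
    rw [show -X + 2 * (X + 1 : ℚ[X]) = X + 2 by ring] at h1
    nth_rewrite 1 [h1]
    rw [add_pow X 2, sum_mul, ← sum_add_distrib]
    refine sum_congr rfl fun i hi => ?_
    have hi : i ≤ e := Nat.lt_succ_iff.mp (mem_range.mp hi)
    rw [show M + α - i = e - i + f by omega, pow_add]
    simp only [smul_eq_C_mul, map_mul, map_pow, map_neg, map_one, map_natCast, map_ofNat, mul_pow]
    ring
  rw [hexp, map_sum]
  refine sum_eq_zero fun i hi => ?_
  have hpar := one_add_neg_one_pow_mul_bernoulliFunctional_X_pow α M hM i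
  rw [map_smul, map_add, map_smul, bernoulliFunctional_X_add_one_pow_mul_X_pow α M i,
    smul_eq_mul, smul_eq_mul]
  split_ifs at hpar ⊢ with hiM
  · have hi : Even i := by
      by_contra h
      exact Nat.not_even_iff_odd.mpr hM (hiM ▸ (Nat.not_even_iff_odd.mp h).add_one)
    rw [hi.neg_one_pow] at hpar ⊢
    linear_combination (e.choose i * 2 ^ (e - i) : ℚ) * hpar
  · linear_combination (e.choose i * 2 ^ (e - i) : ℚ) * hpar

end

noncomputable def zagierPoly (N e : ℕ) : ℚ[X] :=
  ∑ r ∈ range N,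
    ((e.choose (2 * r + 1) + e.choose (2 * N - 2 * r) : ℕ) : ℚ) • (X + 1) ^ (2 * N - 2 * r)

theorem two_mul_zagierPoly {N e f : ℕ} (he : e ≤ 2 * N) (he2 : Even e)
    (hef : e + f = 2 * N + 1) :
    2 * zagierPoly N e = ((X + 2) ^ e - X ^ e) * (X + 1) ^ f + ((X + 2) ^ e + X ^ e - 2) := by
  have hodd := two_mul_sum_choose_odd_mul_pow (X + 1 : ℚ[X]) he hef
  have heven := two_mul_sum_choose_even_mul_pow (X + 1 : ℚ[X]) he he2
  rw [add_sub_cancel_right, show (X + 1 : ℚ[X]) + 1 = X + 2 by ring] at hodd heven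
  rw [← hodd, ← heven, ← mul_add, ← sum_add_distrib, zagierPoly]
  simp only [Nat.cast_smul_eq_nsmul, nsmul_eq_mul]
  push_cast
  simp only [add_mul]

theorem bernoulliFunctional_zagierPoly {N τ : ℕ} (σ : ℕ) (hτ : τ < N) :
    bernoulliFunctional (2 * τ) (2 * N + 1 - 2 * τ) (zagierPoly N (2 * N - 2 * σ))
      = if σ = τ then -(2 * τ + 1 : ℚ) / 2 else 0 := by
  set α := 2 * τ
  set M := 2 * N + 1 - 2 * τ
  set e := 2 * N - 2 * σ
  have hM : Odd M := ⟨N - τ, by omega⟩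
  have h2G := two_mul_zagierPoly (N := N) (e := e) (f := M + α - e) (by omega)
    ⟨N - σ, by omega⟩ (by omega)
  have hsplit : 2 * zagierPoly N e
      = ((X + 2) ^ e * (X + 1) ^ (M + α - e) + (X + 2) ^ e)
          - ((X + 1) ^ (M + α - e) * X ^ e - X ^ e) - (2 : ℚ) • 1 := by
    rw [h2G, smul_eq_C_mul, map_ofNat]
    ring
  have hunit : bernoulliFunctional α M 1 = 0 := by
    simpa [show 1 ≠ M by omega] using one_add_neg_one_pow_mul_bernoulliFunctional_X_pow α M hM 0
  have hE : 2 * bernoulliFunctional α M (zagierPoly N e)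
      = -if σ = τ then (α + 1 : ℚ) else 0 := by
    rw [two_mul, ← map_add, ← two_mul, hsplit, map_sub, map_sub, map_sub, map_smul, hunit,
      bernoulliFunctional_X_add_two_pow_mul_add α M hM (by omega),
      bernoulliFunctional_X_add_one_pow_mul_X_pow α M e]
    simp only [show e + 1 = M ↔ σ = τ by omega, smul_zero]
    ring
  split_ifs at hE ⊢
  · simp only [α] at hE
    push_cast at hE
    linarith
  · linarith

end ZagierMatrix

open ZagierMatrix in
theorem zagier_matrix_inverse_first_expression_general (K : ℕ)
    (C D : Matrix (Fin (K - 1)) (Fin (K - 1)) ℚ)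
    (hC : ∀ s r : Fin (K - 1),
      C s r = (Nat.choose (2 * K - 2 * (s.1 + 1)) (2 * (r.1 + 1) - 1) : ℚ)
        + (Nat.choose (2 * K - 2 * (s.1 + 1)) (2 * K - 2 * (r.1 + 1)) : ℚ))
    (hD : ∀ r s : Fin (K - 1),
      D r s = (-2 / (2 * ((s.1 : ℚ) + 1) - 1)) *
        ∑ n ∈ Finset.range (2 * K + 1 - 2 * (s.1 + 1) + 1),
          (Nat.choose (2 * K + 1 - 2 * (r.1 + 1) - 1) (2 * K + 1 - 2 * (s.1 + 1) - n) : ℚ)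
            * (Nat.choose (n + 2 * (s.1 + 1) - 2) n : ℚ) * bernoulli n) :
    C * D = 1 ∧ D * C = 1 := by
  have hD' : ∀ r t : Fin (K - 1), D r t = -2 / (2 * t + 1) *
      bernoulliFunctional (2 * t) (2 * (K - 1) + 1 - 2 * t)
        ((X + 1) ^ (2 * (K - 1) - 2 * r)) := by
    intro r t
    rw [hD, bernoulliFunctional_X_add_one_pow, show 2 * ((t.1 : ℚ) + 1) - 1 = 2 * t + 1 by ring,
      show 2 * K + 1 - 2 * (t.1 + 1) = 2 * (K - 1) + 1 - 2 * t by omega,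
      show 2 * K + 1 - 2 * (r.1 + 1) - 1 = 2 * (K - 1) - 2 * r by omega]
    refine congrArg _ (sum_congr rfl fun n _ => ?_)
    rw [show n + 2 * (t.1 + 1) - 2 = n + 2 * t by omega]
  have hCD : C * D = 1 := by
    ext s t
    calc (C * D) s t
        = -2 / (2 * t + 1) * bernoulliFunctional (2 * t) (2 * (K - 1) + 1 - 2 * t)
            (∑ r : Fin (K - 1), (C s r) • (X + 1) ^ (2 * (K - 1) - 2 * r)) := by
          simp only [Matrix.mul_apply, hD', map_sum, map_smul, mul_sum, smul_eq_mul]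
          exact sum_congr rfl fun r _ => by ring
      _ = -2 / (2 * t + 1) * bernoulliFunctional (2 * t) (2 * (K - 1) + 1 - 2 * t)
            (zagierPoly (K - 1) (2 * (K - 1) - 2 * s)) := by
          rw [zagierPoly, ← Fin.sum_univ_eq_sum_range]
          congr 2
          refine sum_congr rfl fun r _ => ?_
          rw [hC, show 2 * K - 2 * (s.1 + 1) = 2 * (K - 1) - 2 * s by omega,
            show 2 * (r.1 + 1) - 1 = 2 * r + 1 by omega,
            show 2 * K - 2 * (r.1 + 1) = 2 * (K - 1) - 2 * r by omega, Nat.cast_add]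
      _ = (1 : Matrix (Fin (K - 1)) (Fin (K - 1)) ℚ) s t := by
          rw [bernoulliFunctional_zagierPoly s t.2, Matrix.one_apply]
          by_cases hst : s = t
          · rw [if_pos (congrArg Fin.val hst), if_pos hst]
            field_simp
          · rw [if_neg (Fin.val_ne_of_ne hst), if_neg hst, mul_zero]
  exact ⟨hCD, mul_eq_one_comm.mp hCD⟩

/-- **Inverse of the Zagier matrix 𝒞, first expression.**
For odd `k = 2K+1 ≥ 5`, the matrix `D` with entries
`D_{r,s} = (-2/(2s-1)) · ∑_{n=0}^{k-2s} C(k-2r-1, k-2s-n) · C(n+2s-2, n) · B_n`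
is a two-sided inverse of the matrix `𝒞` with entries
`𝒞_{s,r} = C(2K-2s, 2r-1) + C(2K-2s, 2K-2r)` (indices `1 ≤ s, r ≤ K-1`). -/
theorem zagier_matrix_inverse_first_expression (K : ℕ) (hK : 2 ≤ K)
    (C D : Matrix (Fin (K - 1)) (Fin (K - 1)) ℚ)
    (hC : ∀ s r : Fin (K - 1),
      C s r = (Nat.choose (2 * K - 2 * (s.1 + 1)) (2 * (r.1 + 1) - 1) : ℚ)
        + (Nat.choose (2 * K - 2 * (s.1 + 1)) (2 * K - 2 * (r.1 + 1)) : ℚ))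
    (hD : ∀ r s : Fin (K - 1),
      D r s = (-2 / (2 * ((s.1 : ℚ) + 1) - 1)) *
        ∑ n ∈ Finset.range (2 * K + 1 - 2 * (s.1 + 1) + 1),
          (Nat.choose (2 * K + 1 - 2 * (r.1 + 1) - 1) (2 * K + 1 - 2 * (s.1 + 1) - n) : ℚ)
            * (Nat.choose (n + 2 * (s.1 + 1) - 2) n : ℚ) * bernoulli n) :
    C * D = 1 ∧ D * C = 1 :=
  zagier_matrix_inverse_first_expression_general K C D hC hD
end

section
/- Let k = 2K+1 ≥ 5 be an odd integer. Let D' be the (K-1)×(K-1) rational matrix with entries D'_{r,s} = (2/(2s-1)) · ∑_{n=0}^{k-2s} C(2r-1, k-2s-n) · C(n+2s-2, n) · B_n for 1 ≤ r, s ≤ K-1. Then D' is a two-sided inverse of 𝒞, i.e. 𝒞 · D' = I and D' · 𝒞 = I, where I is the (K-1)×(K-1) identity matrix. (In particular, (𝒞^{-1})_{r,s} = D'_{r,s}.) -/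
/-!
Put `G_q(m, x) = ∑ₙ C(x, m-n) C(n+q-1, n) Bₙ`, the coefficient of `tᵐ` in
`(1 + t)ˣ · ∑ₙ C(n+q-1, n) Bₙ tⁿ`, so that `D'_{r,s} = 2/(2s-1) · G_{2s-1}(k-2s, 2r-1)`.
Pascal's rule gives `Δₓ G_q(m+1, x) = G_q(m, x)`, so an alternating binomial sum
`∑ⱼ (-1)ʲ C(N, j) G_q(m, j)` is an iterated forward difference and collapses to the single term
`(-1)ᴺ C(m-N+q-1, m-N) B_{m-N}` (zero if `N > m`). Moreover `G_q(m, x) = (-1)ᵐ G_q(m, y)` whenever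
`x + y + 1 = q + m`, by induction on `m` and `x` from `∑ₙ C(m, n) Bₙ = B'ₘ`.
For `m = k - 2s` odd this reflection folds the two binomial terms in a row of `𝒞` into one
alternating sum; as the odd Bernoulli numbers past `B₁` vanish, only the diagonal survives,
where `B₁ = -1/2` produces the factor `(2s-1)/2`.
-/

open Finset fwdDiff

def binomBernoulliSum (q m x : ℕ) : ℚ :=
  ∑ n ∈ range (m + 1), (x.choose (m - n) : ℚ) * ((n + q - 1).choose n : ℚ) * bernoulli n

theorem sum_range_succ_choose_mul_bernoulli (m : ℕ) :
    ∑ k ∈ range (m + 1), (m.choose k : ℚ) * bernoulli k = bernoulli' m := by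
  rw [sum_range_succ, sum_bernoulli, Nat.choose_self, Nat.cast_one, one_mul]
  split_ifs with hm
  · subst hm
    norm_num [bernoulli_one, bernoulli'_one]
  · rw [zero_add, bernoulli_eq_bernoulli'_of_ne_one hm]

namespace binomBernoulliSum

lemma zero_left (q x : ℕ) : binomBernoulliSum q 0 x = 1 := by
  simp [binomBernoulliSum]

lemma zero_right (q m : ℕ) :
    binomBernoulliSum q m 0 = ((m + q - 1).choose m : ℚ) * bernoulli m := by
  rw [binomBernoulliSum, sum_eq_single_of_mem m (self_mem_range_succ m)]
  · simp
  · intro n hn hnm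
    rw [Nat.choose_eq_zero_of_lt (by grind)]
    simp

lemma succ_succ (q m x : ℕ) :
    binomBernoulliSum q (m + 1) (x + 1)
      = binomBernoulliSum q (m + 1) x + binomBernoulliSum q m x := by
  have hpascal : ∀ n ∈ range (m + 1),
      ((x + 1).choose (m + 1 - n) : ℚ) * ((n + q - 1).choose n : ℚ) * bernoulli n
        = (x.choose (m + 1 - n) : ℚ) * ((n + q - 1).choose n : ℚ) * bernoulli n
          + (x.choose (m - n) : ℚ) * ((n + q - 1).choose n : ℚ) * bernoulli n := by
    intro n hn
    rw [show m + 1 - n = m - n + 1 by grind, Nat.choose_succ_succ, Nat.cast_add]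
    ring
  simp only [binomBernoulliSum]
  rw [sum_range_succ _ (m + 1), sum_range_succ _ (m + 1), sum_congr rfl hpascal, sum_add_distrib]
  simp only [Nat.sub_self, Nat.choose_zero_right]
  ring

lemma fwdDiff (q m : ℕ) : Δ_[1] (binomBernoulliSum q (m + 1)) = binomBernoulliSum q m := by
  ext x
  simp [_root_.fwdDiff, succ_succ]

lemma fwdDiff_iter (q N m : ℕ) :
    (Δ_[1])^[N] (binomBernoulliSum q m)
      = if N ≤ m then binomBernoulliSum q (m - N) else 0 := by
  induction N generalizing m with
  | zero => simp
  | succ N ih =>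
    rw [Function.iterate_succ_apply]
    cases m with
    | zero =>
      have hconst : binomBernoulliSum q 0 = fun _ => (1 : ℚ) := funext (zero_left q)
      simp only [hconst, fwdDiff_const]
      exact Function.iterate_fixed (fwdDiff_const 1 (0 : ℚ)) N
    | succ m => simp [fwdDiff, ih]

lemma alternating_sum_choose_mul (q m N R : ℕ) (hR : N < R) :
    ∑ j ∈ range R, (-1 : ℚ) ^ j * (N.choose j : ℚ) * binomBernoulliSum q m j
      = (-1) ^ N *
        if N ≤ m then ((m - N + q - 1).choose (m - N) : ℚ) * bernoulli (m - N) else 0 := by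
  have hsign : ∀ j ∈ range (N + 1),
      (-1 : ℚ) ^ j * (N.choose j : ℚ) * binomBernoulliSum q m j
        = (-1) ^ N *
          (((-1 : ℤ) ^ (N - j) * N.choose j) • binomBernoulliSum q m (0 + j • 1)) := by
    intro j hj
    have hpow : (-1 : ℚ) ^ N = (-1) ^ (N - j) * (-1) ^ j := by
      rw [← pow_add, Nat.sub_add_cancel (by grind)]
    have hsq : (-1 : ℚ) ^ (N - j) * (-1) ^ (N - j) = 1 := by
      rw [← pow_add, ← two_mul, pow_mul]
      norm_num
    rw [hpow, zsmul_eq_mul, smul_eq_mul, mul_one, zero_add]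
    push_cast
    linear_combination (-(-1 : ℚ) ^ j * N.choose j * binomBernoulliSum q m j) * hsq
  calc ∑ j ∈ range R, (-1 : ℚ) ^ j * (N.choose j : ℚ) * binomBernoulliSum q m j
      = ∑ j ∈ range (N + 1), (-1 : ℚ) ^ j * (N.choose j : ℚ) * binomBernoulliSum q m j := by
        refine (sum_subset (range_subset_range.mpr hR) fun j _ hj => ?_).symm
        rw [Nat.choose_eq_zero_of_lt (by grind)]
        simp
    _ = (-1) ^ N * (Δ_[1])^[N] (binomBernoulliSum q m) 0 := by
        rw [sum_congr rfl hsign, ← mul_sum, fwdDiff_iter_eq_sum_shift]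
    _ = _ := by
        rw [fwdDiff_iter]
        split_ifs <;> simp [zero_right]

lemma add_sub_one_right (q m : ℕ) :
    binomBernoulliSum q m (q + m - 1) = ((q + m - 1).choose m : ℚ) * bernoulli' m := by
  have hterm : ∀ n ∈ range (m + 1),
      ((q + m - 1).choose (m - n) : ℚ) * ((n + q - 1).choose n : ℚ) * bernoulli n
        = ((q + m - 1).choose m : ℚ) * ((m.choose n : ℚ) * bernoulli n) := by
    intro n hn
    have hnm : n ≤ m := Nat.lt_succ_iff.mp (mem_range.mp hn)
    have hmul := Nat.choose_mul (n := q + m - 1) (Nat.sub_le m n)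
    rw [show q + m - 1 - (m - n) = n + q - 1 by omega, Nat.sub_sub_self hnm,
      Nat.choose_symm hnm] at hmul
    rw [← mul_assoc, ← Nat.cast_mul, ← Nat.cast_mul, hmul]
  rw [binomBernoulliSum, sum_congr rfl hterm, ← mul_sum, sum_range_succ_choose_mul_bernoulli]

theorem reflect (q : ℕ) {m x y : ℕ} (hxy : x + y + 1 = q + m) :
    binomBernoulliSum q m x = (-1) ^ m * binomBernoulliSum q m y := by
  induction m generalizing x y with
  | zero => simp [zero_left]
  | succ m ihm =>
    induction x generalizing y with
    | zero =>
      obtain rfl : y = q + (m + 1) - 1 := by omega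
      rw [zero_right, add_sub_one_right, bernoulli'_eq_bernoulli, add_comm (m + 1) q,
        mul_left_comm (((q + (m + 1) - 1).choose (m + 1) : ℕ) : ℚ), ← mul_assoc, ← pow_add,
        Even.neg_one_pow ⟨_, rfl⟩, one_mul]
    | succ x ihx =>
      rw [succ_succ, ihx (y := y + 1) (by omega), ihm (y := y) (by omega), succ_succ, pow_succ]
      ring

end binomBernoulliSum

theorem Finset.sum_range_two_mul {M : Type*} [AddCommMonoid M] (f : ℕ → M) (n : ℕ) :
    ∑ j ∈ range (2 * n), f j = ∑ i ∈ range n, (f (2 * i) + f (2 * i + 1)) := by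
  induction n with
  | zero => simp
  | succ n ih => rw [mul_add_one, sum_range_succ, sum_range_succ, ih, sum_range_succ, add_assoc]

theorem sum_range_add_mul_odd_eq_of_antisymm {R : Type*} [CommRing R] (L : ℕ)
    (c g : ℕ → R) (hg : ∀ i < L, g (2 * i + 1) = -g (2 * L - 2 * i)) :
    ∑ i ∈ range L, (c (2 * i + 1) + c (2 * L - 2 * i)) * g (2 * i + 1)
      = c 0 * g 0 - ∑ j ∈ range (2 * L + 1), (-1) ^ j * c j * g j := by
  have hfold : ∀ i ∈ range L, (c (2 * i + 1) + c (2 * L - 2 * i)) * g (2 * i + 1)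
      = c (2 * i + 1) * g (2 * i + 1) - c (2 * L - 2 * i) * g (2 * L - 2 * i) := by
    intro i hi
    linear_combination c (2 * L - 2 * i) * hg i (mem_range.mp hi)
  have hreflect : ∑ i ∈ range L, c (2 * L - 2 * i) * g (2 * L - 2 * i)
      = ∑ i ∈ range L, c (2 * i + 2) * g (2 * i + 2) := by
    rw [← sum_range_reflect]
    refine sum_congr rfl fun i hi => ?_
    rw [show 2 * L - 2 * (L - 1 - i) = 2 * i + 2 by grind]
  have hpair : ∀ i ∈ range L,
      (-1) ^ (2 * i + 1) * c (2 * i + 1) * g (2 * i + 1)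
        + (-1) ^ (2 * i + 1 + 1) * c (2 * i + 1 + 1) * g (2 * i + 1 + 1)
      = -(c (2 * i + 1) * g (2 * i + 1) - c (2 * i + 2) * g (2 * i + 2)) := by
    intro i _
    rw [Odd.neg_one_pow ⟨i, rfl⟩, Even.neg_one_pow ⟨i + 1, by ring⟩]
    ring
  rw [sum_congr rfl hfold, sum_sub_distrib, hreflect, ← sum_sub_distrib, sum_range_succ',
    sum_range_two_mul, sum_congr rfl hpair, sum_neg_distrib]
  ring

theorem sum_choose_add_choose_mul_binomBernoulliSum (L a b : ℕ) (hb : b < L) :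
    ∑ i ∈ range L,
        (((2 * L - 2 * a).choose (2 * i + 1) : ℚ) + (2 * L - 2 * a).choose (2 * L - 2 * i))
          * binomBernoulliSum (2 * b + 1) (2 * L - 2 * b + 1) (2 * i + 1)
      = if a = b then (2 * b + 1 : ℚ) / 2 else 0 := by
  set M := 2 * L - 2 * a
  set m := 2 * L - 2 * b + 1
  have hm : Odd m := ⟨L - b, by omega⟩
  have hantisymm : ∀ i < L, binomBernoulliSum (2 * b + 1) m (2 * i + 1)
      = -binomBernoulliSum (2 * b + 1) m (2 * L - 2 * i) := by
    intro i hi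
    rw [binomBernoulliSum.reflect _ (y := 2 * L - 2 * i) (by omega), hm.neg_one_pow, neg_one_mul]
  rw [sum_range_add_mul_odd_eq_of_antisymm L (fun j => (M.choose j : ℚ)) _ hantisymm,
    binomBernoulliSum.alternating_sum_choose_mul _ _ _ _ (by omega),
    binomBernoulliSum.zero_right, bernoulli_eq_zero_of_odd hm (by omega),
    Even.neg_one_pow ⟨L - a, by omega⟩]
  split_ifs with hM hab hab
  · subst hab
    rw [show m - M = 1 by omega, show 1 + (2 * a + 1) - 1 = 2 * a + 1 by omega,
      Nat.choose_one_right, bernoulli_one]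
    push_cast
    ring
  · rw [bernoulli_eq_zero_of_odd ⟨(m - M) / 2, by omega⟩ (by omega)]
    simp
  · omega
  · simp

/-- `𝒞` for `k = 2L + 3`, indexed from `0`. -/
def zagierMatrix (L : ℕ) : Matrix (Fin L) (Fin L) ℚ :=
  Matrix.of fun s r =>
    ((2 * L - 2 * s.1).choose (2 * r.1 + 1) : ℚ) + (2 * L - 2 * s.1).choose (2 * L - 2 * r.1)

def zagierInverse (L : ℕ) : Matrix (Fin L) (Fin L) ℚ :=
  Matrix.of fun r s =>
    2 / (2 * s.1 + 1) * binomBernoulliSum (2 * s.1 + 1) (2 * L - 2 * s.1 + 1) (2 * r.1 + 1)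

theorem zagierMatrix_mul_zagierInverse (L : ℕ) : zagierMatrix L * zagierInverse L = 1 := by
  ext a b
  have hentry := sum_choose_add_choose_mul_binomBernoulliSum L a b b.2
  simp only [Finset.sum_range, Fin.val_inj] at hentry
  rw [Matrix.mul_apply, Matrix.one_apply]
  simp only [zagierMatrix, zagierInverse, Matrix.of_apply, mul_left_comm _ (2 / _ : ℚ),
    ← mul_sum]
  rw [hentry]
  split_ifs
  · field_simp
  · simp

theorem zagier_matrix_inverse_second_expression_general (K : ℕ)
    (C D' : Matrix (Fin (K - 1)) (Fin (K - 1)) ℚ)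
    (hC : ∀ s r : Fin (K - 1),
      C s r = (Nat.choose (2 * K - 2 * (s.1 + 1)) (2 * (r.1 + 1) - 1) : ℚ)
        + (Nat.choose (2 * K - 2 * (s.1 + 1)) (2 * K - 2 * (r.1 + 1)) : ℚ))
    (hD' : ∀ r s : Fin (K - 1),
      D' r s = (2 / (2 * ((s.1 : ℚ) + 1) - 1)) *
        ∑ n ∈ Finset.range (2 * K + 1 - 2 * (s.1 + 1) + 1),
          (Nat.choose (2 * (r.1 + 1) - 1) (2 * K + 1 - 2 * (s.1 + 1) - n) : ℚ)
            * (Nat.choose (n + 2 * (s.1 + 1) - 2) n : ℚ) * bernoulli n) :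
    C * D' = 1 ∧ D' * C = 1 := by
  have hC_eq : C = zagierMatrix (K - 1) := by
    ext s r
    have hs := s.2
    rw [hC, zagierMatrix, Matrix.of_apply]
    congr 3 <;> omega
  have hD_eq : D' = zagierInverse (K - 1) := by
    ext r s
    have hs := s.2
    rw [hD', zagierInverse, Matrix.of_apply, binomBernoulliSum]
    congr 1
    · ring
    · rw [show 2 * K + 1 - 2 * (s.1 + 1) = 2 * (K - 1) - 2 * s.1 + 1 by omega]
      refine sum_congr rfl fun n _ => ?_
      congr 4
  have hmul : C * D' = 1 := hC_eq ▸ hD_eq ▸ zagierMatrix_mul_zagierInverse (K - 1)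
  exact ⟨hmul, mul_eq_one_comm.mp hmul⟩

/-- **Inverse of the Zagier matrix 𝒞, second expression.**
For odd `k = 2K+1 ≥ 5`, the matrix `D'` with entries
`D'_{r,s} = (2/(2s-1)) · ∑_{n=0}^{k-2s} C(2r-1, k-2s-n) · C(n+2s-2, n) · B_n`
is a two-sided inverse of the matrix `𝒞` with entries
`𝒞_{s,r} = C(2K-2s, 2r-1) + C(2K-2s, 2K-2r)` (indices `1 ≤ s, r ≤ K-1`). -/
theorem zagier_matrix_inverse_second_expression (K : ℕ) (hK : 2 ≤ K)
    (C D' : Matrix (Fin (K - 1)) (Fin (K - 1)) ℚ)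
    (hC : ∀ s r : Fin (K - 1),
      C s r = (Nat.choose (2 * K - 2 * (s.1 + 1)) (2 * (r.1 + 1) - 1) : ℚ)
        + (Nat.choose (2 * K - 2 * (s.1 + 1)) (2 * K - 2 * (r.1 + 1)) : ℚ))
    (hD' : ∀ r s : Fin (K - 1),
      D' r s = (2 / (2 * ((s.1 : ℚ) + 1) - 1)) *
        ∑ n ∈ Finset.range (2 * K + 1 - 2 * (s.1 + 1) + 1),
          (Nat.choose (2 * (r.1 + 1) - 1) (2 * K + 1 - 2 * (s.1 + 1) - n) : ℚ)
            * (Nat.choose (n + 2 * (s.1 + 1) - 2) n : ℚ) * bernoulli n) :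
    C * D' = 1 ∧ D' * C = 1 :=
  zagier_matrix_inverse_second_expression_general K C D' hC hD'
end

section
/- Let k = 2K+1 ≥ 5 be an odd integer and let i be an integer with 0 ≤ i ≤ k-2. Then for all real numbers x and y, G_k^{(i)}(x+y, x) + G_k^{(i)}(x+y, y) = R_k^{(i)}(x, y). -/
/-- `G_k^{(i)}(x,y)` for `k = 2K+1`:
`∑_{s=1}^{K-1} ((2/(2s-1)) · ∑_{n=0}^{k-2s} C(k-2-i,k-2s-n)·C(n+2s-2,n)·B_n) · x^{2K-2s} y^{2s-1}`. -/
noncomputable def Gpoly (K i : ℕ) (x y : ℝ) : ℝ :=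
  ∑ s ∈ Finset.Icc 1 (K - 1),
    (((2 / (2 * (s : ℚ) - 1)) * ∑ n ∈ Finset.range (2 * K + 1 - 2 * s + 1),
        (Nat.choose (2 * K + 1 - 2 - i) (2 * K + 1 - 2 * s - n) : ℚ)
          * (Nat.choose (n + 2 * s - 2) n : ℚ) * bernoulli n : ℚ) : ℝ)
      * x ^ (2 * K - 2 * s) * y ^ (2 * s - 1)

/-- `R_k^{(i)}(x,y) = -((k-2-2i)/(k-2))x^{k-2} + (-1)^i x^{k-2-i} y^i
+ (-1)^i x^i y^{k-2-i} - ((k-2-2i)/(k-2))y^{k-2}`. -/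
noncomputable def Rpoly (k i : ℕ) (x y : ℝ) : ℝ :=
  -(((k : ℝ) - 2 - 2 * (i : ℝ)) / ((k : ℝ) - 2)) * x ^ (k - 2)
    + (-1) ^ i * x ^ (k - 2 - i) * y ^ i
    + (-1) ^ i * x ^ i * y ^ (k - 2 - i)
    - (((k : ℝ) - 2 - 2 * (i : ℝ)) / ((k : ℝ) - 2)) * y ^ (k - 2)

/-!
Write `c_s` for the coefficients of `G`. Adding the top term `s = K`, whose coefficient is
`c_K = (k-2-2i)/(k-2)`, turns the claim into
`∑_{s ≤ K} c_s (x+y)^{2K-2s} (x^{2s-1} + y^{2s-1}) = (-1)^i (x^{k-2-i} y^i + x^i y^{k-2-i})`.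
By continuity we may assume `x + y ≠ 0` and dehomogenize to `x = a`, `y = 1 - a`.
Substituting `N = n + 2s - 2` writes
`c_s = ∑_N C(k-2-i, k-2-N) · (2/(2s-1)) C(N, 2s-2) B_{N+2-2s}`, and
`∑_s (2/(2s-1)) C(N, 2s-2) B_{N+2-2s} z^{2s-1} = (B_{N+1}(z) - B_{N+1}(-z))/(N+1)`
is the odd part of a Bernoulli polynomial. Evaluated at `z = a` and `z = 1 - a`, the translation
formula `B_n(1 + z) = B_n(z) + n z^{n-1}` collapses the sum of the two to `(-a)^N + (a-1)^N`, and
the binomial theorem then sums these against the weights `C(k-2-i, k-2-N)`.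
-/

open Finset

lemma sum_range_two_mul_add_one_eq_sum_odd {M : Type*} [AddCommMonoid M] (K : ℕ) {f : ℕ → M}
    (hf : ∀ t, f (2 * t) = 0) :
    ∑ b ∈ range (2 * K + 1), f b = ∑ s ∈ Icc 1 K, f (2 * s - 1) := by
  induction K with
  | zero => simpa using hf 0
  | succ K ih =>
    rw [show 2 * (K + 1) + 1 = 2 * K + 1 + 1 + 1 by ring, sum_range_succ, sum_range_succ, ih,
      sum_Icc_succ_top (by omega), show 2 * K + 1 + 1 = 2 * (K + 1) by ring, hf,
      show 2 * (K + 1) - 1 = 2 * K + 1 by omega, add_zero]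

lemma sum_range_choose_sub_mul_pow {R : Type*} [CommSemiring R] {M e : ℕ} (hM : M ≤ e) (w : R) :
    ∑ N ∈ range (e + 1), (M.choose (e - N) : R) * w ^ N = w ^ (e - M) * (w + 1) ^ M := by
  rw [← sum_range_add_sum_Ico _ (show e - M ≤ e + 1 by omega),
    sum_eq_zero fun N hN => by
      simp [Nat.choose_eq_zero_of_lt (show M < e - N by simp at hN; omega)],
    zero_add, sum_Ico_eq_sum_range, show e + 1 - (e - M) = M + 1 by omega, add_pow, mul_sum]
  refine sum_congr rfl fun t ht => ?_
  have ht : t ≤ M := by simp at ht; omega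
  rw [show e - (e - M + t) = M - t by omega, Nat.choose_symm ht, pow_add, one_pow]
  ring

section BernoulliOddPart

open Polynomial

variable {F : Type*} [Field F] [CharZero F]

lemma aeval_bernoulli (n : ℕ) (z : F) :
    aeval z (bernoulli n)
      = ∑ b ∈ range (n + 1), (_root_.bernoulli (n - b) * n.choose b : F) * z ^ b := by
  simp [bernoulli_def, aeval_monomial]

lemma aeval_bernoulli_one_add (n : ℕ) (z : F) :
    aeval (1 + z) (bernoulli n) = aeval z (bernoulli n) + n * z ^ (n - 1) := by
  simpa [aeval_comp] using congr(aeval z $(bernoulli_comp_one_add_X n))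

lemma aeval_bernoulli_sub_aeval_neg {n K : ℕ} (hn : n ≤ 2 * K) (z : F) :
    aeval z (bernoulli n) - aeval (-z) (bernoulli n)
      = ∑ s ∈ Icc 1 K,
          2 * n.choose (2 * s - 1) * _root_.bernoulli (n + 1 - 2 * s) * z ^ (2 * s - 1) := by
  set f : ℕ → F := fun b => _root_.bernoulli (n - b) * n.choose b * (z ^ b - (-z) ^ b)
  have hf : ∀ t, f (2 * t) = 0 := fun t => by simp [f, (even_two_mul t).neg_pow]
  have hext : ∑ b ∈ range (n + 1), f b = ∑ b ∈ range (2 * K + 1), f b :=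
    sum_subset (range_subset_range.mpr (by omega)) fun b hb hnb => by
      simp [f, Nat.choose_eq_zero_of_lt (show n < b by simp at hb hnb; omega)]
  rw [aeval_bernoulli, aeval_bernoulli, ← sum_sub_distrib]
  simp_rw [← mul_sub]
  rw [hext, sum_range_two_mul_add_one_eq_sum_odd K hf]
  refine sum_congr rfl fun s hs => ?_
  have hodd : Odd (2 * s - 1) := ⟨s - 1, by simp at hs; omega⟩
  simp only [f, hodd.neg_pow, show n - (2 * s - 1) = n + 1 - 2 * s by simp at hs; omega]
  ring

lemma aeval_bernoulli_odd_part_add_one_sub (n : ℕ) (a : F) :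
    (aeval a (bernoulli n) - aeval (-a) (bernoulli n))
      + (aeval (1 - a) (bernoulli n) - aeval (-(1 - a)) (bernoulli n))
      = n * ((-a) ^ (n - 1) + (a - 1) ^ (n - 1)) := by
  have h₁ := aeval_bernoulli_one_add n (a - 1)
  have h₂ := aeval_bernoulli_one_add n (-a)
  rw [show 1 + (a - 1) = a by ring] at h₁
  rw [show 1 + -a = 1 - a by ring] at h₂
  rw [show -(1 - a) = a - 1 by ring]
  linear_combination h₁ + h₂

lemma sum_bernoulli_odd_part_add_one_sub {N K : ℕ} (hN : N < 2 * K) (a : F) :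
    ∑ s ∈ Icc 1 K, 2 / (2 * (s : F) - 1) * N.choose (2 * s - 2)
        * _root_.bernoulli (N + 2 - 2 * s) * (a ^ (2 * s - 1) + (1 - a) ^ (2 * s - 1))
      = (-a) ^ N + (a - 1) ^ N := by
  have key := aeval_bernoulli_odd_part_add_one_sub (N + 1) a
  rw [aeval_bernoulli_sub_aeval_neg (K := K) (by omega),
    aeval_bernoulli_sub_aeval_neg (K := K) (by omega), ← sum_add_distrib, Nat.add_sub_cancel,
    Nat.cast_add_one] at key
  apply mul_left_cancel₀ (Nat.cast_add_one_ne_zero N : (N + 1 : F) ≠ 0)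
  rw [mul_sum, ← key]
  refine sum_congr rfl fun s hs => ?_
  obtain ⟨hs₁, hsK⟩ := mem_Icc.mp hs
  have hs : (2 * s - 1 : ℕ) = 2 * (s : F) - 1 := by rw [Nat.cast_sub (by omega)]; push_cast; ring
  have hchoose :
      ((N + 1) * N.choose (2 * s - 2) : F) = (N + 1).choose (2 * s - 1) * (2 * s - 1 : ℕ) := by
    rw [show 2 * s - 1 = 2 * s - 2 + 1 by omega]
    exact_mod_cast Nat.add_one_mul_choose_eq N (2 * s - 2)
  rw [hs] at hchoose
  rw [show N + 1 + 1 - 2 * s = N + 2 - 2 * s by omega]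
  have : (2 * s - 1 : F) ≠ 0 := by rw [← hs]; exact_mod_cast (show 2 * s - 1 ≠ 0 by omega)
  field_simp
  linear_combination
    (_root_.bernoulli (N + 2 - 2 * s) : F) * (a ^ (2 * s - 1) + (1 - a) ^ (2 * s - 1)) * hchoose

end BernoulliOddPart

lemma sum_choose_mul_choose_mul_bernoulli_reindex (M : ℕ) {k s : ℕ} (hs : 1 ≤ s) (hsk : 2 * s ≤ k) :
    ∑ n ∈ range (k - 2 * s + 1),
        (M.choose (k - 2 * s - n) : ℚ) * (n + 2 * s - 2).choose n * bernoulli n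
      = ∑ N ∈ range (k - 1),
        (M.choose (k - 2 - N) : ℚ) * N.choose (2 * s - 2) * bernoulli (N + 2 - 2 * s) := by
  symm
  rw [← sum_range_add_sum_Ico _ (show 2 * s - 2 ≤ k - 1 by omega),
    sum_eq_zero fun N hN => by
      simp [Nat.choose_eq_zero_of_lt (show N < 2 * s - 2 by simpa using hN)],
    zero_add, sum_Ico_eq_sum_range, show k - 1 - (2 * s - 2) = k - 2 * s + 1 by omega]
  refine sum_congr rfl fun n _ => ?_
  rw [show k - 2 - (2 * s - 2 + n) = k - 2 * s - n by omega,
    show 2 * s - 2 + n + 2 - 2 * s = n by omega, show n + 2 * s - 2 = 2 * s - 2 + n by omega,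
    Nat.choose_symm_add]

def Gcoeff (K i s : ℕ) : ℚ :=
  2 / (2 * (s : ℚ) - 1) * ∑ n ∈ range (2 * K + 1 - 2 * s + 1),
    ((2 * K + 1 - 2 - i).choose (2 * K + 1 - 2 * s - n) : ℚ) * (n + 2 * s - 2).choose n
      * bernoulli n

lemma Gpoly_eq_sum_Gcoeff (K i : ℕ) (x y : ℝ) :
    Gpoly K i x y
      = ∑ s ∈ Icc 1 (K - 1), (Gcoeff K i s : ℝ) * x ^ (2 * K - 2 * s) * y ^ (2 * s - 1) :=
  rfl

lemma Gcoeff_eq_sum {K s : ℕ} (i : ℕ) (hs : s ∈ Icc 1 K) :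
    Gcoeff K i s = 2 / (2 * (s : ℚ) - 1) * ∑ N ∈ range (2 * K),
      ((2 * K - 1 - i).choose (2 * K - 1 - N) : ℚ) * N.choose (2 * s - 2)
        * bernoulli (N + 2 - 2 * s) := by
  obtain ⟨hs₁, hsK⟩ := mem_Icc.mp hs
  rw [Gcoeff, sum_choose_mul_choose_mul_bernoulli_reindex _ hs₁ (by omega),
    show 2 * K + 1 - 1 = 2 * K by omega, show 2 * K + 1 - 2 = 2 * K - 1 by omega]

lemma Gcoeff_self {K i : ℕ} (hK : 1 ≤ K) (hi : i ≤ 2 * K - 1) :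
    Gcoeff K i K = (2 * K - 1 - 2 * i) / (2 * K - 1) := by
  rw [Gcoeff, show 2 * K + 1 - 2 * K + 1 = 2 by omega, sum_range_succ, sum_range_one,
    show 2 * K + 1 - 2 * K - 0 = 1 by omega, show 2 * K + 1 - 2 * K - 1 = 0 by omega,
    show 1 + 2 * K - 2 = 2 * K - 1 by omega, show 2 * K + 1 - 2 - i = 2 * K - 1 - i by omega]
  simp only [Nat.choose_one_right, Nat.choose_zero_right, bernoulli_zero, bernoulli_one]
  rw [Nat.cast_sub hi, Nat.cast_sub (by omega)]
  have : (2 * K - 1 : ℚ) ≠ 0 := by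
    have : (1 : ℚ) ≤ K := by exact_mod_cast hK
    linarith
  push_cast
  field_simp
  ring

lemma sum_Gcoeff_mul_odd_pow_add_one_sub {F : Type*} [Field F] [CharZero F] {K i : ℕ}
    (hK : 1 ≤ K) (hi : i ≤ 2 * K - 1) (a : F) :
    ∑ s ∈ Icc 1 K, (Gcoeff K i s : F) * (a ^ (2 * s - 1) + (1 - a) ^ (2 * s - 1))
      = (-1) ^ i * (a ^ (2 * K - 1 - i) * (1 - a) ^ i + a ^ i * (1 - a) ^ (2 * K - 1 - i)) := by
  calc _ = ∑ N ∈ range (2 * K), ((2 * K - 1 - i).choose (2 * K - 1 - N) : F)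
        * ∑ s ∈ Icc 1 K, 2 / (2 * (s : F) - 1) * N.choose (2 * s - 2) * bernoulli (N + 2 - 2 * s)
          * (a ^ (2 * s - 1) + (1 - a) ^ (2 * s - 1)) := by
        rw [sum_congr rfl fun s hs => by rw [Gcoeff_eq_sum i hs]]
        push_cast
        simp_rw [mul_sum, sum_mul]
        rw [sum_comm]
        exact sum_congr rfl fun N _ => sum_congr rfl fun s _ => by ring
    _ = ∑ N ∈ range (2 * K - 1 + 1),
          ((2 * K - 1 - i).choose (2 * K - 1 - N) : F) * ((-a) ^ N + (a - 1) ^ N) := by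
        rw [show 2 * K - 1 + 1 = 2 * K by omega]
        exact sum_congr rfl fun N hN => by
          rw [sum_bernoulli_odd_part_add_one_sub (by simpa using hN)]
    _ = _ := by
        simp_rw [mul_add]
        rw [sum_add_distrib, sum_range_choose_sub_mul_pow (by omega),
          sum_range_choose_sub_mul_pow (by omega), show 2 * K - 1 - (2 * K - 1 - i) = i by omega,
          neg_add_eq_sub, sub_add_cancel, neg_pow a, show a - 1 = -(1 - a) by ring, neg_pow (1 - a)]
        ring

lemma sum_Gcoeff_mul_scaled {K i : ℕ} (hK : 1 ≤ K) (hi : i ≤ 2 * K - 1) (u a : ℝ) :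
    ∑ s ∈ Icc 1 K, (Gcoeff K i s : ℝ) * u ^ (2 * K - 2 * s)
        * ((u * a) ^ (2 * s - 1) + (u * (1 - a)) ^ (2 * s - 1))
      = (-1) ^ i * ((u * a) ^ (2 * K - 1 - i) * (u * (1 - a)) ^ i
          + (u * a) ^ i * (u * (1 - a)) ^ (2 * K - 1 - i)) := by
  calc _ = u ^ (2 * K - 1)
          * ∑ s ∈ Icc 1 K, (Gcoeff K i s : ℝ) * (a ^ (2 * s - 1) + (1 - a) ^ (2 * s - 1)) := by
        rw [mul_sum]
        refine sum_congr rfl fun s hs => ?_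
        rw [mul_pow, mul_pow,
          show 2 * K - 1 = (2 * K - 2 * s) + (2 * s - 1) by simp at hs; omega, pow_add]
        ring
    _ = _ := by
        rw [sum_Gcoeff_mul_odd_pow_add_one_sub hK hi, mul_pow, mul_pow, mul_pow, mul_pow,
          show 2 * K - 1 = (2 * K - 1 - i) + i by omega, Nat.add_sub_cancel, pow_add]
        ring

lemma sum_Gcoeff_mul_add_pow {K i : ℕ} (hK : 1 ≤ K) (hi : i ≤ 2 * K - 1) (x y : ℝ) :
    ∑ s ∈ Icc 1 K,
        (Gcoeff K i s : ℝ) * (x + y) ^ (2 * K - 2 * s) * (x ^ (2 * s - 1) + y ^ (2 * s - 1))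
      = (-1) ^ i * (x ^ (2 * K - 1 - i) * y ^ i + x ^ i * y ^ (2 * K - 1 - i)) := by
  suffices h : Set.EqOn (fun y => ∑ s ∈ Icc 1 K, (Gcoeff K i s : ℝ) * (x + y) ^ (2 * K - 2 * s)
      * (x ^ (2 * s - 1) + y ^ (2 * s - 1)))
      (fun y => (-1) ^ i * (x ^ (2 * K - 1 - i) * y ^ i + x ^ i * y ^ (2 * K - 1 - i))) {-x}ᶜ from
    congrFun (Continuous.ext_on (dense_compl_singleton (-x)) (by fun_prop) (by fun_prop) h) y
  intro y hy
  have hu : x + y ≠ 0 := fun h => hy (by simp; linarith)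
  have := sum_Gcoeff_mul_scaled hK hi (x + y) (x / (x + y))
  rwa [mul_div_cancel₀ _ hu, show (x + y) * (1 - x / (x + y)) = y by field_simp; ring] at this

/-- **Main functional equation for `G`.**
For odd `k = 2K+1 ≥ 5` and `0 ≤ i ≤ k-2`, one has
`G_k^{(i)}(x+y, x) + G_k^{(i)}(x+y, y) = R_k^{(i)}(x, y)` for all real `x, y`. -/
theorem Gpoly_functional_equation (K i : ℕ) (hK : 2 ≤ K) (hi : i ≤ 2 * K + 1 - 2) :
    ∀ x y : ℝ, Gpoly K i (x + y) x + Gpoly K i (x + y) y = Rpoly (2 * K + 1) i x y := by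
  intro x y
  have hK₁ : 1 ≤ K := by omega
  have hi' : i ≤ 2 * K - 1 := by omega
  have h := sum_Gcoeff_mul_add_pow hK₁ hi' x y
  rw [← Nat.sub_add_cancel hK₁, sum_Icc_succ_top (by omega), Nat.sub_add_cancel hK₁,
    Gcoeff_self hK₁ hi', Nat.sub_self, pow_zero] at h
  simp only [mul_add, sum_add_distrib] at h
  rw [Gpoly_eq_sum_Gcoeff, Gpoly_eq_sum_Gcoeff, Rpoly, show 2 * K + 1 - 2 = 2 * K - 1 by omega]
  push_cast at h ⊢
  linear_combination h
end

section
/- Let k = 2K+1 ≥ 5 be an odd integer and let i be an integer with 0 ≤ i ≤ k-2. Then for every fixed real number x, the second derivative with respect to y of the function y ↦ F_k^{(i)}(x, y) equals (k-2-i)(k-3-i) · F_{k-2}^{(i)}(x, y) - 2i(k-2-i) · G_{k-2}^{(k-3-i)}(x, y) + i(i-1) · F_{k-2}^{(i-2)}(x, y), where any term whose scalar coefficient vanishes (in particular those with superscript i-2 < 0 when i ≤ 1, or with superscript k-3-i out of range) is interpreted as zero. -/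
/-- `F_k^{(i)}(x,y)` for `k = 2K+1`:
`∑_{s=1}^{K-1} ((-2/(2s-1)) · ∑_{n=0}^{k-2s} C(i,k-2s-n)·C(n+2s-2,n)·B_n) · x^{2K-2s} y^{2s-1}`. -/
noncomputable def Fpoly (K i : ℕ) (x y : ℝ) : ℝ :=
  ∑ s ∈ Finset.Icc 1 (K - 1),
    (((-2 / (2 * (s : ℚ) - 1)) * ∑ n ∈ Finset.range (2 * K + 1 - 2 * s + 1),
        (Nat.choose i (2 * K + 1 - 2 * s - n) : ℚ)
          * (Nat.choose (n + 2 * s - 2) n : ℚ) * bernoulli n : ℚ) : ℝ)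
      * x ^ (2 * K - 2 * s) * y ^ (2 * s - 1)

/-!
In `y`, `F_k^{(i)}` is an odd polynomial whose coefficient of `y^(2s-1)` is
`-2/(2s-1) · ∑_n C(i, k-2s-n) C(n+2s-2, n) B_n`. Differentiating twice kills the `s = 1` term
and multiplies the coefficient of `y^(2s+1)` by `(2s+1)(2s)`, so everything reduces to an
identity between coefficients, which already holds term by term in `n`: with `j = k-2-2s-n`,
`(2s-1)(2s) C(n+2s, n) = (k-2-j)(k-3-j) C(n+2s-2, n)`, and expanding `(k-2-j)(k-3-j) C(i, j)`
around `k-2-i` by means of `(i-j) C(i, j) = i C(i-1, j)` yields exactly the three terms of the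
right-hand side. Finally `G_{k-2}^{(k-3-i)} = -F_{k-2}^{(i-1)}`.
-/

open Finset

section Binomial

variable {R : Type*} [CommRing R]

lemma cast_sub_mul_choose (n k : ℕ) :
    ((n : R) - k) * n.choose k = n * (n - 1).choose k := by
  rcases n with _ | n
  · rcases k with _ | k <;> simp
  rcases le_or_gt k (n + 1) with hk | hk
  · have h := Nat.choose_mul_succ_eq n k
    rw [← Nat.cast_sub hk, Nat.add_sub_cancel]
    norm_cast
    congr 1
    linarith
  · simp [Nat.choose_eq_zero_of_lt hk, Nat.choose_eq_zero_of_lt (by omega : n < k)]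

lemma cast_sub_mul_sub_one_mul_choose (n k : ℕ) :
    ((n : R) - k) * ((n : R) - k - 1) * n.choose k = n * (n - 1) * (n - 2).choose k := by
  rcases n with _ | n
  · rcases k with _ | k <;> simp
  have h₁ := cast_sub_mul_choose (R := R) (n + 1) k
  have h₂ := cast_sub_mul_choose (R := R) n k
  rw [Nat.add_sub_cancel] at h₁
  rw [show n + 1 - 2 = n - 1 by omega]
  push_cast at h₁ ⊢
  linear_combination ((n : R) - k) * h₁ + ((n : R) + 1) * h₂

/-- Writing `c - k = (c - n) + (n - k)` and expanding. -/
lemma sub_mul_sub_one_mul_choose (c : R) (n k : ℕ) :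
    (c - k) * (c - k - 1) * n.choose k =
      (c - n) * (c - n - 1) * n.choose k + 2 * n * (c - n) * (n - 1).choose k
        + n * (n - 1) * (n - 2).choose k := by
  linear_combination 2 * (c - n) * cast_sub_mul_choose (R := R) n k
    + cast_sub_mul_sub_one_mul_choose (R := R) n k

lemma add_one_mul_add_choose (n m : ℕ) :
    (m + 1) * (n + m + 1).choose n = (n + m + 1) * (n + m).choose n := by
  rw [show n + m + 1 = n + (m + 1) by omega, Nat.choose_symm_add, Nat.choose_symm_add,
    mul_comm, ← add_assoc, Nat.add_one_mul_choose_eq]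

lemma cast_add_one_mul_add_two_mul_add_choose (n m : ℕ) :
    ((m : R) + 1) * ((m : R) + 2) * (n + m + 2).choose n
      = ((n : R) + m + 1) * ((n : R) + m + 2) * (n + m).choose n := by
  have h₀ := add_one_mul_add_choose n m
  have h₁ := add_one_mul_add_choose n (m + 1)
  rw [show n + (m + 1) + 1 = n + m + 2 by omega, show n + (m + 1) = n + m + 1 by omega] at h₁
  have h₀' := congrArg (Nat.cast (R := R)) h₀
  have h₁' := congrArg (Nat.cast (R := R)) h₁
  push_cast at h₀' h₁'
  linear_combination ((m : R) + 1) * h₁' + ((n : R) + m + 2) * h₀'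

def chooseSum (b : ℕ → R) (a j s : ℕ) : R :=
  ∑ n ∈ range (j + 1), (a.choose (j - n) : R) * ((n + 2 * s - 2).choose n : R) * b n

lemma chooseSum_succ (b : ℕ → R) (a j u : ℕ) (hu : 1 ≤ u) :
    (2 * (u : R) - 1) * (2 * u) * chooseSum b a j (u + 1)
      = ((j : R) + 2 * u - a) * ((j : R) + 2 * u - a - 1) * chooseSum b a j u
        + 2 * a * ((j : R) + 2 * u - a) * chooseSum b (a - 1) j u
        + a * ((a : R) - 1) * chooseSum b (a - 2) j u := by
  obtain ⟨m, rfl⟩ : ∃ m, u = m + 1 := ⟨u - 1, by omega⟩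
  simp only [chooseSum, mul_sum, ← sum_add_distrib]
  refine sum_congr rfl fun n hn => ?_
  have hn : n ≤ j := Nat.lt_succ_iff.mp (mem_range.mp hn)
  rw [show n + 2 * (m + 1 + 1) - 2 = n + 2 * m + 2 by omega,
    show n + 2 * (m + 1) - 2 = n + 2 * m by omega]
  have hchoose := cast_add_one_mul_add_two_mul_add_choose (R := R) n (2 * m)
  have hshift := sub_mul_sub_one_mul_choose ((j : R) + 2 * (m + 1)) a (j - n)
  rw [Nat.cast_sub hn] at hshift
  push_cast at *
  linear_combination (b n * (a.choose (j - n) : R)) * hchoose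
    + (b n * ((n + 2 * m).choose n : R)) * hshift

end Binomial

def FpolyCoeff (K a s : ℕ) : ℚ := -2 / (2 * s - 1) * chooseSum bernoulli a (2 * K + 1 - 2 * s) s

lemma FpolyCoeff_succ (K a u : ℕ) (hu : 1 ≤ u) (huK : u + 2 ≤ K) :
    (2 * (u : ℚ) + 1) * (2 * u) * FpolyCoeff K a (u + 1)
      = (2 * (K : ℚ) - 1 - a) * (2 * (K : ℚ) - 2 - a) * FpolyCoeff (K - 1) a u
        + 2 * a * (2 * (K : ℚ) - 1 - a) * FpolyCoeff (K - 1) (a - 1) u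
        + a * ((a : ℚ) - 1) * FpolyCoeff (K - 1) (a - 2) u := by
  unfold FpolyCoeff
  rw [show 2 * K + 1 - 2 * (u + 1) = 2 * K - 1 - 2 * u by omega,
    show 2 * (K - 1) + 1 - 2 * u = 2 * K - 1 - 2 * u by omega]
  have h := chooseSum_succ bernoulli a (2 * K - 1 - 2 * u) u hu
  have hj : ((2 * K - 1 - 2 * u : ℕ) : ℚ) = 2 * K - 1 - 2 * u := by
    rw [Nat.cast_sub (by omega), Nat.cast_sub (by omega)]
    push_cast
    ring
  rw [hj] at h
  have hu₁ : (2 * (u : ℚ) - 1) ≠ 0 := by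
    have : (1 : ℚ) ≤ u := by exact_mod_cast hu
    linarith
  have hu₂ : (2 * ((u + 1 : ℕ) : ℚ) - 1) = 2 * u + 1 := by push_cast; ring
  rw [hu₂]
  field_simp
  linear_combination -h

lemma deriv_deriv_sum_mul_pow {𝕜 ι : Type*} [NontriviallyNormedField 𝕜] (S : Finset ι)
    (a : ι → 𝕜) (e : ι → ℕ) (y : 𝕜) :
    deriv (deriv fun t => ∑ s ∈ S, a s * t ^ e s) y
      = ∑ s ∈ S, a s * ((e s : 𝕜) * ((e s - 1 : ℕ) : 𝕜)) * y ^ (e s - 2) := by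
  have h : deriv (fun t => ∑ s ∈ S, a s * t ^ e s)
      = fun z => ∑ s ∈ S, a s * ((e s : 𝕜) * z ^ (e s - 1)) := by
    funext z
    exact (HasDerivAt.fun_sum fun s _ => (hasDerivAt_pow (e s) z).const_mul (a s)).deriv
  rw [h]
  refine (HasDerivAt.fun_sum fun s _ =>
    (((hasDerivAt_pow (e s - 1) y).const_mul (e s : 𝕜)).const_mul (a s))).deriv.trans ?_
  refine sum_congr rfl fun s _ => ?_
  rw [Nat.sub_sub]
  ring

lemma sum_Icc_one_eq_sum_Icc_add_one {M : Type*} [AddCommMonoid M] (f : ℕ → M) (N : ℕ)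
    (hf : f 1 = 0) : ∑ s ∈ Icc 1 N, f s = ∑ u ∈ Icc 1 (N - 1), f (u + 1) := by
  rw [← sum_subset (Icc_subset_Icc_left one_le_two) fun s hs hs' => by
    obtain rfl : s = 1 := by simp only [mem_Icc] at hs hs'; omega
    exact hf]
  refine sum_nbij' (· - 1) (· + 1) ?_ ?_ ?_ ?_ ?_ <;> intro s hs <;> simp only [mem_Icc] at hs ⊢
    <;> first | omega | (congr 1; omega)

lemma Fpoly_eq_sum_FpolyCoeff (K i : ℕ) (x y : ℝ) :
    Fpoly K i x y =
      ∑ s ∈ Icc 1 (K - 1), (FpolyCoeff K i s : ℝ) * x ^ (2 * K - 2 * s) * y ^ (2 * s - 1) :=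
  rfl

lemma Gpoly_eq_neg_Fpoly (K d : ℕ) (x y : ℝ) :
    Gpoly K d x y = -Fpoly K (2 * K + 1 - 2 - d) x y := by
  simp only [Gpoly, Fpoly, ← sum_neg_distrib]
  refine sum_congr rfl fun s _ => ?_
  push_cast
  ring

lemma deriv_deriv_Fpoly (K i : ℕ) (x y : ℝ) :
    deriv (deriv fun t => Fpoly K i x t) y
      = (2 * (K : ℝ) - 1 - i) * (2 * (K : ℝ) - 2 - i) * Fpoly (K - 1) i x y
        + 2 * i * (2 * (K : ℝ) - 1 - i) * Fpoly (K - 1) (i - 1) x y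
        + i * ((i : ℝ) - 1) * Fpoly (K - 1) (i - 2) x y := by
  simp only [Fpoly_eq_sum_FpolyCoeff]
  rw [deriv_deriv_sum_mul_pow, sum_Icc_one_eq_sum_Icc_add_one _ _ (by simp)]
  simp only [mul_sum, ← sum_add_distrib]
  refine sum_congr rfl fun u hu => ?_
  rw [mem_Icc] at hu
  have h := congrArg (Rat.cast (K := ℝ)) (FpolyCoeff_succ K i u hu.1 (by omega))
  rw [show 2 * K - 2 * (u + 1) = 2 * (K - 1) - 2 * u by omega,
    show 2 * (u + 1) - 1 - 2 = 2 * u - 1 by omega,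
    show 2 * (u + 1) - 1 - 1 = 2 * u by omega,
    show 2 * (u + 1) - 1 = 2 * u + 1 by omega]
  push_cast at h ⊢
  linear_combination (x ^ (2 * (K - 1) - 2 * u) * y ^ (2 * u - 1)) * h

theorem Fpoly_second_deriv_general (K i : ℕ) (hi : i ≤ 2 * K + 1 - 2) :
    ∀ x y : ℝ, deriv (deriv (fun t : ℝ => Fpoly K i x t)) y =
      ((2 * K + 1 : ℝ) - 2 - (i : ℝ)) * ((2 * K + 1 : ℝ) - 3 - (i : ℝ))
          * Fpoly (K - 1) i x y
        - 2 * (i : ℝ) * ((2 * K + 1 : ℝ) - 2 - (i : ℝ))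
          * Gpoly (K - 1) (2 * K + 1 - 3 - i) x y
        + (i : ℝ) * ((i : ℝ) - 1) * Fpoly (K - 1) (i - 2) x y := by
  intro x y
  -- For `i = k - 2` the superscript `k - 3 - i` truncates to `0`, but then its coefficient vanishes.
  have hG : ((2 * K + 1 : ℝ) - 2 - i) * Fpoly (K - 1) (2 * (K - 1) + 1 - 2 - (2 * K + 1 - 3 - i)) x y
      = ((2 * K + 1 : ℝ) - 2 - i) * Fpoly (K - 1) (i - 1) x y := by
    rcases (by omega : i + 1 = 2 * K ∨ 2 * (K - 1) + 1 - 2 - (2 * K + 1 - 3 - i) = i - 1)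
      with hc | hidx
    · have hc : (i : ℝ) + 1 = 2 * K := by exact_mod_cast hc
      rw [show (2 * K + 1 : ℝ) - 2 - i = 0 by linarith, zero_mul, zero_mul]
    · rw [hidx]
  rw [deriv_deriv_Fpoly, Gpoly_eq_neg_Fpoly]
  linear_combination -2 * (i : ℝ) * hG

/-- **Second derivative of `F` in `y`.**
For odd `k = 2K+1 ≥ 5` and `0 ≤ i ≤ k-2`, for every fixed real `x`,
`∂²/∂y² F_k^{(i)}(x,y) = (k-2-i)(k-3-i)·F_{k-2}^{(i)}(x,y)
  - 2i(k-2-i)·G_{k-2}^{(k-3-i)}(x,y) + i(i-1)·F_{k-2}^{(i-2)}(x,y)`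
(note `k-2 = 2(K-1)+1`; superscripts are truncated natural subtractions, which is
harmless since the corresponding scalar coefficients then vanish). -/
theorem Fpoly_second_deriv (K i : ℕ) (hK : 2 ≤ K) (hi : i ≤ 2 * K + 1 - 2) :
    ∀ x y : ℝ, deriv (deriv (fun t : ℝ => Fpoly K i x t)) y =
      ((2 * K + 1 : ℝ) - 2 - (i : ℝ)) * ((2 * K + 1 : ℝ) - 3 - (i : ℝ))
          * Fpoly (K - 1) i x y
        - 2 * (i : ℝ) * ((2 * K + 1 : ℝ) - 2 - (i : ℝ))
          * Gpoly (K - 1) (2 * K + 1 - 3 - i) x y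
        + (i : ℝ) * ((i : ℝ) - 1) * Fpoly (K - 1) (i - 2) x y :=
  Fpoly_second_deriv_general K i hi
end

section
/- Let k = 2K+1 ≥ 5 be an odd integer and let i be an integer with 0 ≤ i ≤ k-2. Then for every fixed real number x, the second derivative with respect to y of the function y ↦ R_k^{(i)}(x-y, y) equals (k-2-i)(k-3-i) · R_{k-2}^{(i)}(x-y, y) - 2i(k-2-i) · R_{k-2}^{(k-3-i)}(x-y, y) + i(i-1) · R_{k-2}^{(i-2)}(x-y, y), where any term whose scalar coefficient vanishes (in particular those with superscript i-2 < 0 when i ≤ 1) is interpreted as zero. -/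
/-!
Put `u = x - t`, `v = t`, so that `d/dt = ∂_v - ∂_u` and
`R_{n+2}^{(i)}(u, v) = -((n - 2i)/n) (u^n + v^n) + (-1)^i (u^{n-i} v^i + u^i v^{n-i})`.
The second derivative in `t` sends `u^p v^q` to
`p(p-1) u^{p-2} v^q - 2pq u^{p-1} v^{q-1} + q(q-1) u^p v^{q-2}`, so each symmetric pair
`u^p v^q + u^q v^p` goes to a combination of three symmetric pairs. For the pair `(n-i, i)` these
are exactly the pairs of `R_n^{(i)}`, `R_n^{(n-1-i)}` and `R_n^{(i-2)}`; the middle one appears with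
reflected index, which keeps the sign `(-1)^i` because `n - 1` is even. What is left is the
coefficient of `u^{n-2} + v^{n-2}`, which matches by a rational identity in `n` and `i`.
-/

def symmMonomial (p q : ℕ) (u v : ℝ) : ℝ := u ^ p * v ^ q + u ^ q * v ^ p

lemma symmMonomial_comm (p q : ℕ) (u v : ℝ) : symmMonomial p q u v = symmMonomial q p u v :=
  add_comm _ _

lemma Rpoly_add_two (n j : ℕ) (u v : ℝ) :
    Rpoly (n + 2) j u v =
      -(((n : ℝ) - 2 * j) / n) * symmMonomial n 0 u v + (-1) ^ j * symmMonomial (n - j) j u v := by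
  simp only [Rpoly, symmMonomial, Nat.add_sub_cancel]
  push_cast
  ring

lemma hasDerivAt_sub_pow_mul_pow (x : ℝ) (p q : ℕ) (t : ℝ) :
    HasDerivAt (fun s => (x - s) ^ p * s ^ q)
      (q * ((x - t) ^ p * t ^ (q - 1)) - p * ((x - t) ^ (p - 1) * t ^ q)) t := by
  have hsub : HasDerivAt (fun s => x - s) (-1) t := by
    simpa using (hasDerivAt_id t).const_sub x
  have hprod : HasDerivAt (fun s => (x - s) ^ p * s ^ q)
      (p * (x - t) ^ (p - 1) * -1 * t ^ q + (x - t) ^ p * (q * t ^ (q - 1))) t :=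
    ((hasDerivAt_pow p (x - t)).comp t hsub).mul (hasDerivAt_pow q t)
  exact hprod.congr_deriv (by ring)

lemma iteratedDeriv_two_sub_pow_mul_pow (x : ℝ) (p q : ℕ) (y : ℝ) :
    iteratedDeriv 2 (fun t => (x - t) ^ p * t ^ q) y =
      p * (p - 1) * ((x - y) ^ (p - 2) * y ^ q)
        - 2 * p * q * ((x - y) ^ (p - 1) * y ^ (q - 1))
        + q * (q - 1) * ((x - y) ^ p * y ^ (q - 2)) := by
  have hderiv : deriv (fun t => (x - t) ^ p * t ^ q) =
      fun t => q * ((x - t) ^ p * t ^ (q - 1)) - p * ((x - t) ^ (p - 1) * t ^ q) :=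
    funext fun t => (hasDerivAt_sub_pow_mul_pow x p q t).deriv
  rw [iteratedDeriv_succ, iteratedDeriv_one, hderiv,
    (((hasDerivAt_sub_pow_mul_pow x p (q - 1) y).const_mul (q : ℝ)).fun_sub
      ((hasDerivAt_sub_pow_mul_pow x (p - 1) q y).const_mul (p : ℝ))).deriv]
  have hpred (n : ℕ) : (n : ℝ) * ((n - 1 : ℕ) : ℝ) = n * (n - 1) := by
    rcases n with _ | n <;> simp
  rw [Nat.sub_sub, Nat.sub_sub, one_add_one_eq_two]
  linear_combination (x - y) ^ p * y ^ (q - 2) * hpred q + (x - y) ^ (p - 2) * y ^ q * hpred p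

lemma iteratedDeriv_two_symmMonomial (x : ℝ) (p q : ℕ) (y : ℝ) :
    iteratedDeriv 2 (fun t => symmMonomial p q (x - t) t) y =
      p * (p - 1) * symmMonomial (p - 2) q (x - y) y
        - 2 * p * q * symmMonomial (p - 1) (q - 1) (x - y) y
        + q * (q - 1) * symmMonomial p (q - 2) (x - y) y := by
  simp only [symmMonomial]
  rw [iteratedDeriv_fun_add (by fun_prop) (by fun_prop), iteratedDeriv_two_sub_pow_mul_pow,
    iteratedDeriv_two_sub_pow_mul_pow]
  ring

lemma iteratedDeriv_two_Rpoly (n i : ℕ) (x y : ℝ) :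
    iteratedDeriv 2 (fun t => Rpoly (n + 2) i (x - t) t) y =
      -(((n : ℝ) - 2 * i) / n) * (n * (n - 1)) * symmMonomial (n - 2) 0 (x - y) y
        + (-1) ^ i * ((n - i : ℕ) * ((n - i : ℕ) - 1) * symmMonomial (n - i - 2) i (x - y) y
          - 2 * (n - i : ℕ) * i * symmMonomial (n - i - 1) (i - 1) (x - y) y
          + i * (i - 1) * symmMonomial (n - i) (i - 2) (x - y) y) := by
  simp only [Rpoly_add_two]
  rw [iteratedDeriv_fun_add (by simp only [symmMonomial]; fun_prop)
      (by simp only [symmMonomial]; fun_prop),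
    iteratedDeriv_const_mul_field, iteratedDeriv_const_mul_field, iteratedDeriv_two_symmMonomial,
    iteratedDeriv_two_symmMonomial]
  push_cast
  ring

-- Both sides carry the factor that vanishes exactly when the natural-number index below
-- (`m + 1 - i`, resp. `i - 2`) is truncated.
lemma mul_Rpoly_reflect (m i : ℕ) (hm : Odd m) (hi : i ≤ m + 2) (u v : ℝ) :
    (i : ℝ) * ((m : ℝ) + 2 - i) * Rpoly (m + 2) (m + 1 - i) u v =
      i * ((m : ℝ) + 2 - i) * (-(((m : ℝ) - 2 * ((m : ℝ) + 1 - i)) / m) * symmMonomial m 0 u v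
        + (-1) ^ i * symmMonomial (m + 1 - i) (i - 1) u v) := by
  obtain rfl | rfl | ⟨hi₁, hi₂⟩ : i = 0 ∨ i = m + 2 ∨ 1 ≤ i ∧ i ≤ m + 1 := by omega
  · simp
  · simp
  · have hm₂ : m % 2 = 1 := Nat.odd_iff.mp hm
    rw [Rpoly_add_two, show m - (m + 1 - i) = i - 1 by omega, symmMonomial_comm (i - 1),
      neg_one_pow_congr (m := m + 1 - i) (n := i) (by rw [Nat.even_iff, Nat.even_iff]; omega),
      Nat.cast_sub hi₂]
    push_cast
    ring

lemma mul_Rpoly_sub_two (m i : ℕ) (u v : ℝ) :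
    (i : ℝ) * (i - 1) * Rpoly (m + 2) (i - 2) u v =
      i * (i - 1) * (-(((m : ℝ) - 2 * ((i : ℝ) - 2)) / m) * symmMonomial m 0 u v
        + (-1) ^ i * symmMonomial (m + 2 - i) (i - 2) u v) := by
  obtain hi | ⟨j, rfl⟩ : i ≤ 1 ∨ ∃ j, i = j + 2 := by
    rcases i with _ | _ | j <;> simp
  · interval_cases i <;> simp
  · rw [Rpoly_add_two, Nat.add_sub_cancel, Nat.add_sub_add_right, pow_add (-1 : ℝ) j 2]
    push_cast
    ring

theorem deriv_deriv_Rpoly (m i : ℕ) (hm : Odd m) (hi : i ≤ m + 2) (x y : ℝ) :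
    deriv (deriv fun t => Rpoly (m + 4) i (x - t) t) y =
      ((m : ℝ) + 2 - i) * ((m : ℝ) + 1 - i) * Rpoly (m + 2) i (x - y) y
        - 2 * (i * ((m : ℝ) + 2 - i) * Rpoly (m + 2) (m + 1 - i) (x - y) y)
        + i * (i - 1) * Rpoly (m + 2) (i - 2) (x - y) y := by
  rw [← iteratedDeriv_one, ← iteratedDeriv_succ', show m + 4 = m + 2 + 2 from rfl,
    iteratedDeriv_two_Rpoly, mul_Rpoly_reflect m i hm hi, mul_Rpoly_sub_two, Rpoly_add_two,
    show m + 2 - i - 2 = m - i by omega, show m + 2 - i - 1 = m + 1 - i by omega,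
    Nat.add_sub_cancel, Nat.cast_sub hi]
  have hm₀ : (m : ℝ) ≠ 0 := by exact_mod_cast hm.pos.ne'
  have hcoeff : -(((m : ℝ) + 2 - 2 * i) / (m + 2)) * ((m + 2) * (m + 2 - 1)) =
      (m + 2 - i) * (m + 1 - i) * -((m - 2 * i) / m)
        - 2 * (i * (m + 2 - i) * -((m - 2 * (m + 1 - i)) / m))
        + i * (i - 1) * -((m - 2 * (i - 2)) / m) := by
    field_simp
    ring
  push_cast
  linear_combination symmMonomial m 0 (x - y) y * hcoeff

/-- **Second derivative of `R` in `y`.**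
For odd `k = 2K+1 ≥ 5` and `0 ≤ i ≤ k-2`, for every fixed real `x`,
`∂²/∂y² (R_k^{(i)}(x-y,y)) = (k-2-i)(k-3-i)·R_{k-2}^{(i)}(x-y,y)
  - 2i(k-2-i)·R_{k-2}^{(k-3-i)}(x-y,y) + i(i-1)·R_{k-2}^{(i-2)}(x-y,y)`
(superscripts are truncated natural subtractions, which is harmless since the
corresponding scalar coefficients then vanish). -/
theorem Rpoly_second_deriv (K i : ℕ) (hK : 2 ≤ K) (hi : i ≤ 2 * K + 1 - 2) :
    ∀ x y : ℝ, deriv (deriv (fun t : ℝ => Rpoly (2 * K + 1) i (x - t) t)) y =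
      ((2 * K + 1 : ℝ) - 2 - (i : ℝ)) * ((2 * K + 1 : ℝ) - 3 - (i : ℝ))
          * Rpoly (2 * K + 1 - 2) i (x - y) y
        - 2 * (i : ℝ) * ((2 * K + 1 : ℝ) - 2 - (i : ℝ))
          * Rpoly (2 * K + 1 - 2) (2 * K + 1 - 3 - i) (x - y) y
        + (i : ℝ) * ((i : ℝ) - 1) * Rpoly (2 * K + 1 - 2) (i - 2) (x - y) y := by
  intro x y
  obtain ⟨m, hm, hk⟩ : ∃ m, Odd m ∧ 2 * K + 1 = m + 4 :=
    ⟨2 * K - 3, ⟨K - 2, by omega⟩, by omega⟩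
  have hk' : (2 * K + 1 : ℝ) = m + 4 := by exact_mod_cast hk
  rw [hk, hk', deriv_deriv_Rpoly m i hm (by omega), show m + 4 - 2 = m + 2 from rfl,
    show m + 4 - 3 - i = m + 1 - i by omega]
  ring
end

section
/- For every integer k ≥ 4 and every integer i with 1 ≤ i ≤ k-3, one has A_k^{(i)} = 0, where A_k^{(i)} := ∑_{s=1}^{⌊k/2⌋} (-2/(2s-1)) · ∑_{n=0}^{k-2s} C(i, k-2s-n) · C(n+2s-2, n) · B_n. -/
/-!
Pascal's rule `C(i+1, j) = C(i, j) + C(i, j-1)` gives `A_k^{(i+1)} = A_k^{(i)} + A_{k-1}^{(i)}`,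
so everything reduces to `A_k^{(0)} = -(-1)^k` for `k ≥ 3`, which already makes `A_k^{(1)}`
vanish. For `i = 0` only the term `n = k - 2s` survives, and
`C(k-2, k-2s) / (2s-1) = C(k-1, k-2s) / (k-1)` turns `A_k^{(0)}` into `-2/(k-1)` times
`∑_{m - j odd} C(m, j) B_j` with `m = k - 1`. That sum is `(B_m(1) - B_m(-1)) / 2`, and the
difference equation `B_m(x + 1) - B_m(x) = m x^(m-1)` of the Bernoulli polynomials evaluates it
to `m (-1)^(m-1) / 2`.
-/

/-- `A_k^{(i)} = ∑_{s=1}^{⌊k/2⌋} (-2/(2s-1)) · ∑_{n=0}^{k-2s} C(i,k-2s-n)·C(n+2s-2,n)·B_n`. -/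
noncomputable def Aterm (k i : ℕ) : ℚ :=
  ∑ s ∈ Finset.Icc 1 (k / 2),
    (-2 / (2 * (s : ℚ) - 1)) * ∑ n ∈ Finset.range (k - 2 * s + 1),
      (Nat.choose i (k - 2 * s - n) : ℚ) * (Nat.choose (n + 2 * s - 2) n : ℚ) * bernoulli n

open Finset

theorem sum_choose_mul_bernoulli_filter_odd_sub {m : ℕ} (hm : 2 ≤ m) :
    ∑ i ∈ range (m + 1) with Odd (m - i), (m.choose i : ℚ) * bernoulli i
      = m * (-1) ^ (m - 1) / 2 := by
  have eval_eq (x : ℚ) : (Polynomial.bernoulli m).eval x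
      = ∑ i ∈ range (m + 1), (m.choose i : ℚ) * bernoulli i * x ^ (m - i) := by
    simp only [Polynomial.bernoulli, Polynomial.eval_finsetSum, Polynomial.eval_monomial]
    exact sum_congr rfl fun i _ => by ring
  have eval_one_sub_eval_neg_one :
      (Polynomial.bernoulli m).eval 1 - (Polynomial.bernoulli m).eval (-1)
        = m * (-1) ^ (m - 1) := by
    have h0 := Polynomial.bernoulli_eval_one_add m 0
    have h1 := Polynomial.bernoulli_eval_one_add m (-1)
    rw [add_zero, zero_pow (by omega), mul_zero, add_zero] at h0
    rw [add_neg_cancel] at h1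
    linarith
  rw [← eval_one_sub_eval_neg_one, eval_eq, eval_eq, ← sum_sub_distrib, sum_filter,
    sum_div]
  refine sum_congr rfl fun i _ => ?_
  rcases Nat.even_or_odd (m - i) with h | h
  · simp [h.neg_one_pow, Nat.not_odd_iff_even.mpr h]
  · rw [if_pos h, h.neg_one_pow]; ring

theorem sum_Icc_sub_two_mul_eq_sum_filter_odd {M : Type*} [AddCommMonoid M] (n : ℕ)
    (f : ℕ → M) :
    ∑ s ∈ Icc 1 ((n + 1) / 2), f (n + 1 - 2 * s) = ∑ i ∈ range (n + 1) with Odd (n - i), f i := by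
  apply sum_bij' (fun s _ => n + 1 - 2 * s) (fun i _ => (n + 1 - i) / 2) <;>
    simp only [mem_filter, mem_range, mem_Icc, Nat.odd_iff] <;> intros <;> first | trivial | omega

theorem sum_range_choose_succ_mul {R : Type*} [CommSemiring R] (i m : ℕ) (f : ℕ → R) :
    ∑ n ∈ range (m + 1), ((i + 1).choose (m - n) : R) * f n
      = ∑ n ∈ range (m + 1), (i.choose (m - n) : R) * f n
        + ∑ n ∈ range m, (i.choose (m - 1 - n) : R) * f n := by
  rw [sum_range_succ, sum_range_succ, Nat.sub_self, Nat.choose_zero_right,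
    Nat.choose_zero_right, add_right_comm, ← sum_add_distrib]
  congr 1
  refine sum_congr rfl fun n hn => ?_
  rw [show m - n = m - 1 - n + 1 by grind, Nat.choose_succ_succ']
  push_cast
  ring

theorem Aterm_succ_right (k i : ℕ) : Aterm k (i + 1) = Aterm k i + Aterm (k - 1) i := by
  simp only [Aterm, mul_assoc, sum_range_choose_succ_mul, mul_add, sum_add_distrib]
  congr 1
  symm
  have hsub : Icc 1 ((k - 1) / 2) ⊆ Icc 1 (k / 2) := Icc_subset_Icc_right (by omega)
  rw [← sum_subset hsub fun s hs hs' => ?_]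
  · refine sum_congr rfl fun s hs => ?_
    rw [mem_Icc] at hs
    rw [show k - 1 - 2 * s + 1 = k - 2 * s by omega, Nat.sub_right_comm k 1]
  · simp only [mem_Icc] at hs hs'
    simp [show k - 2 * s = 0 by omega]

theorem Aterm_zero_right_summand {m s : ℕ} (hs : 1 ≤ s) (hsm : 2 * s ≤ m + 1) :
    (-2 / (2 * (s : ℚ) - 1)) * ∑ n ∈ range (m + 1 - 2 * s + 1),
      (Nat.choose 0 (m + 1 - 2 * s - n) : ℚ) * (Nat.choose (n + 2 * s - 2) n : ℚ) * bernoulli n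
      = -2 / m * ((m.choose (m + 1 - 2 * s) : ℚ) * bernoulli (m + 1 - 2 * s)) := by
  rw [sum_eq_single_of_mem (m + 1 - 2 * s) (self_mem_range_succ _) fun n hn hne => by
    rw [Nat.choose_eq_zero_of_lt (by grind), Nat.cast_zero, zero_mul, zero_mul]]
  rw [Nat.sub_self, Nat.choose_zero_right, Nat.cast_one, one_mul,
    show m + 1 - 2 * s + 2 * s - 2 = m - 1 by omega]
  have hchoose := Nat.choose_mul_succ_eq (m - 1) (m + 1 - 2 * s)
  rw [Nat.sub_add_cancel (by omega), show m - (m + 1 - 2 * s) = 2 * s - 1 by omega] at hchoose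
  have hchooseQ := congrArg (Nat.cast (R := ℚ)) hchoose
  push_cast [Nat.cast_sub (show 1 ≤ 2 * s by omega)] at hchooseQ
  have hs' : (2 * s - 1 : ℚ) ≠ 0 := by
    have : (1 : ℚ) ≤ s := by exact_mod_cast hs
    linarith
  have hm : (m : ℚ) ≠ 0 := by exact_mod_cast (show m ≠ 0 by omega)
  field_simp
  linear_combination -bernoulli (m + 1 - 2 * s) * hchooseQ

theorem Aterm_zero_right {k : ℕ} (hk : 3 ≤ k) : Aterm k 0 = -(-1) ^ k := by
  obtain ⟨m, rfl⟩ : ∃ m, k = m + 1 := ⟨k - 1, by omega⟩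
  have hm : (m : ℚ) ≠ 0 := by exact_mod_cast (show m ≠ 0 by omega)
  rw [Aterm, sum_congr rfl fun s hs => Aterm_zero_right_summand (mem_Icc.1 hs).1 (by grind),
    ← mul_sum, sum_Icc_sub_two_mul_eq_sum_filter_odd m fun j => (m.choose j : ℚ) * bernoulli j,
    sum_choose_mul_bernoulli_filter_odd_sub (by omega)]
  obtain ⟨t, rfl⟩ : ∃ t, m = t + 1 := ⟨m - 1, by omega⟩
  field_simp
  rw [Nat.add_sub_cancel, pow_succ, pow_succ]
  ring

theorem Aterm_one {k : ℕ} (hk : 4 ≤ k) : Aterm k 1 = 0 := by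
  obtain ⟨m, rfl⟩ : ∃ m, k = m + 1 := ⟨k - 1, by omega⟩
  rw [Aterm_succ_right, Aterm_zero_right (by omega), Nat.add_sub_cancel,
    Aterm_zero_right (by omega), pow_succ]
  ring

/-- **Vanishing of `A_k^{(i)}`.**
For every integer `k ≥ 4` and every integer `i` with `1 ≤ i ≤ k-3`, `A_k^{(i)} = 0`. -/
theorem Aterm_eq_zero (k i : ℕ) (hk : 4 ≤ k) (hi1 : 1 ≤ i) (hi2 : i ≤ k - 3) :
    Aterm k i = 0 := by
  induction i, hi1 using Nat.le_induction generalizing k with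
  | base => exact Aterm_one hk
  | succ i hi ih =>
    rw [Aterm_succ_right, ih k hk (by omega), ih (k - 1) (by omega) (by omega), add_zero]
end

section
/- Let k = 2K+1 ≥ 5 be an odd integer and let i be an arbitrary integer (possibly negative). Then F_k^{(i)} = G_k^{(i)} as polynomials, i.e. for every s with 1 ≤ s ≤ K-1, (-1) · ∑_{n=0}^{k-2s} Ch(i, k-2s-n) · C(n+2s-2, n) · B_n = ∑_{n=0}^{k-2s} Ch(k-2-i, k-2s-n) · C(n+2s-2, n) · B_n, where for an integer a and a natural number b, Ch(a, b) := a(a-1)⋯(a-b+1)/b! is the generalized binomial coefficient (Mathlib's `Ring.choose` over ℚ). -/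
/-!
Upper negation and Chu–Vandermonde give
`Ch(c - x, a) = ∑_j (-1)^j Ch(x, j) C(c - j, a - j)`. Substituting this with `c = m + r` into the
right-hand side and exchanging the sums, trinomial revision turns the inner sum into
`C(q + r, r) ∑_n C(q, n) B_n = (-1)^q C(q + r, r) B_q` with `q = m - j`. As `m` is odd,
`(-1)^(j + q) = -1`, and reversing the order of summation gives minus the left-hand side.
-/

open Finset

namespace Ring

variable {R : Type*} [CommRing R] [BinomialRing R]

theorem choose_neg_eq_neg_one_pow_mul (r : R) (n : ℕ) :
    choose (-r) n = (-1) ^ n * choose (r + n - 1) n := by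
  simp [choose_neg, Int.negOnePow_def, Units.smul_def]

theorem choose_natCast_sub (x : R) {b c : ℕ} (hbc : b ≤ c) :
    choose ((c : R) - x) b =
      ∑ j ∈ range (b + 1), (-1) ^ j * choose x j * (Nat.choose (c - j) (b - j) : R) := by
  have hshift : x - c + b - 1 = x + -((c + 1 - b : ℕ) : R) := by
    push_cast [Nat.cast_sub (by omega : b ≤ c + 1)]; ring
  rw [← neg_sub, choose_neg_eq_neg_one_pow_mul, hshift, add_choose_eq b (Commute.all _ _),
    Nat.sum_antidiagonal_eq_sum_range_succ_mk, mul_sum]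
  refine sum_congr rfl fun j hj => ?_
  have hjb : j ≤ b := Nat.lt_succ_iff.mp (mem_range.mp hj)
  have hupper : ((c + 1 - b : ℕ) : R) + (b - j : ℕ) - 1 = (c - j : ℕ) := by
    push_cast [Nat.cast_sub (by omega : b ≤ c + 1), Nat.cast_sub hjb,
      Nat.cast_sub (hjb.trans hbc)]
    ring
  have hsign : (-1 : R) ^ b * (-1) ^ (b - j) = (-1) ^ j := by
    rw [← pow_add, show b + (b - j) = j + 2 * (b - j) by omega, pow_add, pow_mul]; simp
  rw [choose_neg_eq_neg_one_pow_mul, hupper, choose_natCast, ← hsign]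
  ring

end Ring

theorem Nat.choose_add_mul_choose_add_sub {n q : ℕ} (r : ℕ) (hn : n ≤ q) :
    (n + r).choose n * (q + r).choose (q - n) = (q + r).choose r * q.choose n := by
  rw [Nat.choose_symm_add, Nat.choose_symm_of_eq_add (by omega : q + r = q - n + (n + r)),
    mul_comm, Nat.choose_mul (by omega), Nat.add_sub_cancel, Nat.add_sub_cancel]

theorem sum_range_choose_mul_bernoulli (n : ℕ) :
    ∑ i ∈ range (n + 1), (n.choose i : ℚ) * bernoulli i = (-1) ^ n * bernoulli n := by
  rw [← bernoulli'_eq_bernoulli, ← Polynomial.bernoulli_eval_one, Polynomial.bernoulli,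
    Polynomial.eval_finsetSum]
  simp [mul_comm]

theorem sum_range_choose_mul_choose_mul_bernoulli (q r : ℕ) :
    ∑ n ∈ range (q + 1), ((q + r).choose (q - n) : ℚ) * (n + r).choose n * bernoulli n
      = (-1) ^ q * (q + r).choose r * bernoulli q := by
  calc _ = ∑ n ∈ range (q + 1), ((q + r).choose r : ℚ) * (q.choose n * bernoulli n) := by
        refine sum_congr rfl fun n hn => ?_
        rw [← mul_assoc, mul_comm ((q + r).choose (q - n) : ℚ), ← Nat.cast_mul,
          Nat.choose_add_mul_choose_add_sub r (Nat.lt_succ_iff.mp (mem_range.mp hn))]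
        push_cast; ring
    _ = _ := by rw [← mul_sum, sum_range_choose_mul_bernoulli]; ring

theorem sum_choose_natCast_sub_mul_bernoulli {m : ℕ} (hm : Odd m) (r : ℕ) (x : ℚ) :
    ∑ n ∈ range (m + 1),
        Ring.choose (((m + r : ℕ) : ℚ) - x) (m - n) * (n + r).choose n * bernoulli n
      = -∑ n ∈ range (m + 1), Ring.choose x (m - n) * (n + r).choose n * bernoulli n := by
  calc _ = ∑ n ∈ range (m + 1), ∑ j ∈ range (m - n + 1), (-1) ^ j * Ring.choose x j *
          (((m + r - j).choose (m - n - j) : ℚ) * (n + r).choose n * bernoulli n) := by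
        refine sum_congr rfl fun n _ => ?_
        rw [Ring.choose_natCast_sub x (by omega), sum_mul, sum_mul]
        refine sum_congr rfl fun j _ => by ring
    _ = ∑ j ∈ range (m + 1), (-1) ^ j * Ring.choose x j * ∑ n ∈ range (m - j + 1),
          (((m - j + r).choose (m - j - n) : ℚ) * (n + r).choose n * bernoulli n) := by
        rw [sum_comm' (t' := range (m + 1)) (s' := fun j => range (m - j + 1))
          (fun n j => by simp only [mem_range]; omega)]
        refine sum_congr rfl fun j hj => ?_
        have hjm := mem_range.mp hj
        rw [mul_sum]
        refine sum_congr rfl fun n hn => ?_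
        rw [show m + r - j = m - j + r by omega, show m - n - j = m - j - n by omega]
    _ = -∑ j ∈ range (m + 1),
          Ring.choose x j * (m - j + r).choose (m - j) * bernoulli (m - j) := by
        rw [← sum_neg_distrib]
        refine sum_congr rfl fun j hj => ?_
        have hsign : (-1 : ℚ) ^ j * (-1) ^ (m - j) = -1 := by
          rw [← pow_add, Nat.add_sub_cancel' (Nat.lt_succ_iff.mp (mem_range.mp hj)),
            hm.neg_one_pow]
        rw [sum_range_choose_mul_choose_mul_bernoulli, Nat.choose_symm_add]
        linear_combination
          (Ring.choose x j * ((m - j + r).choose r : ℚ) * bernoulli (m - j)) * hsign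
    _ = _ := by
        rw [← sum_range_reflect]
        refine congrArg _ (sum_congr rfl fun n hn => ?_)
        rw [Nat.add_sub_cancel, Nat.sub_sub_self (Nat.lt_succ_iff.mp (mem_range.mp hn))]

theorem Fpoly_eq_Gpoly_int_general (K : ℕ) (i : ℤ) :
    ∀ s : ℕ, 1 ≤ s → s ≤ K - 1 →
      (-1 : ℚ) * ∑ n ∈ Finset.range (2 * K + 1 - 2 * s + 1),
          Ring.choose (i : ℚ) (2 * K + 1 - 2 * s - n)
            * (Nat.choose (n + 2 * s - 2) n : ℚ) * bernoulli n
      = ∑ n ∈ Finset.range (2 * K + 1 - 2 * s + 1),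
          Ring.choose (((2 * K - 1 - i : ℤ) : ℚ)) (2 * K + 1 - 2 * s - n)
            * (Nat.choose (n + 2 * s - 2) n : ℚ) * bernoulli n := by
  intro s hs hsK
  have hodd : Odd (2 * K + 1 - 2 * s) := ⟨K - s, by omega⟩
  have hupper :
      ((2 * K - 1 - i : ℤ) : ℚ) = ((2 * K + 1 - 2 * s + (2 * s - 2) : ℕ) : ℚ) - i := by
    rw [show 2 * K + 1 - 2 * s + (2 * s - 2) = 2 * K - 1 by omega]
    push_cast [Nat.cast_sub (by omega : 1 ≤ 2 * K)]
    ring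
  have hlower (n : ℕ) : n + 2 * s - 2 = n + (2 * s - 2) := by omega
  simp only [hlower, hupper]
  rw [sum_choose_natCast_sub_mul_bernoulli hodd, neg_one_mul]

/-- **`F_k^{(i)} = G_k^{(i)}` for arbitrary integer `i` (coefficient form).**
For odd `k = 2K+1 ≥ 5` and any integer `i` (possibly negative), for every `1 ≤ s ≤ K-1`,
`(-1) · ∑_{n=0}^{k-2s} Ch(i, k-2s-n)·C(n+2s-2, n)·B_n
  = ∑_{n=0}^{k-2s} Ch(k-2-i, k-2s-n)·C(n+2s-2, n)·B_n`,
where `Ch(a,b) = a(a-1)⋯(a-b+1)/b!` is the generalized binomial coefficient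
(`Ring.choose` over `ℚ`). -/
theorem Fpoly_eq_Gpoly_int (K : ℕ) (hK : 2 ≤ K) (i : ℤ) :
    ∀ s : ℕ, 1 ≤ s → s ≤ K - 1 →
      (-1 : ℚ) * ∑ n ∈ Finset.range (2 * K + 1 - 2 * s + 1),
          Ring.choose (i : ℚ) (2 * K + 1 - 2 * s - n)
            * (Nat.choose (n + 2 * s - 2) n : ℚ) * bernoulli n
      = ∑ n ∈ Finset.range (2 * K + 1 - 2 * s + 1),
          Ring.choose (((2 * K - 1 - i : ℤ) : ℚ)) (2 * K + 1 - 2 * s - n)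
            * (Nat.choose (n + 2 * s - 2) n : ℚ) * bernoulli n :=
  Fpoly_eq_Gpoly_int_general K i
end
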